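/- arXiv:2208.10121 — 2 statements merged into one kernel-verified Lean document; each statement's English description precedes it below -/
import Mathlib

section
/- Parity games (over arbitrary, possibly infinite, game graphs) are positionally determined: for each player i ∈ {0,1} there exists a positional winning strategy with support W_i such that V = W_0 ∪ W_1 and W_0 ∩ W_1 = ∅. -/
/-- A (finite or infinite) path in the graph with edge relation `E`:
`f k = some u` means the `k`-th position is `u`; once `none`, always `none`. -/
structure Play (V : Type) (E : V → V → Prop) where
  f : ℕ → Option V
  first : (f 0).isSome
  closed : ∀ k, f k = none → f (k + 1) = none
  step : ∀ k u v, f k = some u → f (k + 1) = some v → E u v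

/-- A play is maximal if it is infinite or ends in a sink. -/
def Play.IsMax {V : Type} {E : V → V → Prop} (α : Play V E) : Prop :=
  (∀ k, α.f k ≠ none) ∨
    ∃ n u, α.f n = some u ∧ α.f (n + 1) = none ∧ ∀ w, ¬ E u w

/-- A positional strategy for the player owning the vertices `Vi`,
with support `W`: a partial map only defined on `W ∩ Vi`, suggesting
legal moves staying in `W`. -/
structure PStrategy {V : Type} (E : V → V → Prop) (Vi : Set V) where
  W : Set V
  σ : V → Option V
  dom : ∀ w v, σ w = some v → w ∈ W ∧ w ∈ Vi ∧ E w v ∧ v ∈ W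

/-- A play follows a positional strategy if, whenever the strategy is defined
at the current position and the play continues, the next position is the
strategy's suggestion. -/
def Play.Follows {V : Type} {E : V → V → Prop} {Vi : Set V} (α : Play V E)
    (s : PStrategy E Vi) : Prop :=
  ∀ k u v, α.f k = some u → s.σ u = some v → α.f (k + 1) ≠ none → α.f (k + 1) = some v

/-- `s` is a winning strategy (an `i`-strategy) w.r.t. the set of games `C`
and the winning condition `Ci ⊆ C`: every game starting in the support and
following `s` is won. -/
def PStrategy.Winning {V : Type} {E : V → V → Prop} {Vi : Set V}
    (C Ci : Set (Play V E)) (s : PStrategy E Vi) : Prop :=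
  ∀ α ∈ C, (∃ u, α.f 0 = some u ∧ u ∈ s.W) → α.Follows s → α ∈ Ci

/-- Order on strategies: larger support and larger graph of the partial map. -/
def PStrategy.le {V : Type} {E : V → V → Prop} {Vi : Set V}
    (s t : PStrategy E Vi) : Prop :=
  s.W ⊆ t.W ∧ ∀ w v, s.σ w = some v → t.σ w = some v

/-- A maximal winning strategy. -/
def PStrategy.MaxWinning {V : Type} {E : V → V → Prop} {Vi : Set V}
    (C Ci : Set (Play V E)) (s : PStrategy E Vi) : Prop :=
  s.Winning C Ci ∧ ∀ t : PStrategy E Vi, t.Winning C Ci → s.le t → t.le s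

/-- The color `c` occurs infinitely often along the play `α`. -/
def InfOcc {V : Type} {E : V → V → Prop} (χ : V → ℕ) (α : Play V E) (c : ℕ) : Prop :=
  ∀ N, ∃ k, N ≤ k ∧ ∃ u, α.f k = some u ∧ χ u = c

/-- The parity winning condition for the player of parity `par` whose opponent
owns the vertices in `oppSet`: win finite games ending in a sink of the opponent,
and infinite games whose largest infinitely-occurring color has parity `par`. -/
def ParityWinsFor {V : Type} {E : V → V → Prop} (χ : V → ℕ) (oppSet : Set V)
    (par : ℕ) (α : Play V E) : Prop :=
  (∃ n u, α.f n = some u ∧ α.f (n + 1) = none ∧ u ∈ oppSet) ∨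
  ((∀ k, α.f k ≠ none) ∧
    ∃ c, InfOcc χ α c ∧ c % 2 = par ∧ ∀ c', InfOcc χ α c' → c' ≤ c)

/-- The set of games won by the player of parity `par` (opponent owns `oppSet`). -/
def ParityWinSet {V : Type} (E : V → V → Prop) (χ : V → ℕ) (oppSet : Set V)
    (par : ℕ) : Set (Play V E) :=
  {α | α.IsMax ∧ ParityWinsFor χ oppSet par α}

/-- The player owning `Vi` wins the game at position `v`:
there is a positional winning strategy whose support contains `v`. -/
def WinsAt {V : Type} (E : V → V → Prop) (Vi : Set V)
    (C Ci : Set (Play V E)) (v : V) : Prop :=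
  ∃ s : PStrategy E Vi, s.Winning C Ci ∧ v ∈ s.W

-- ===== Group A : play utilities =====
section GroupA
variable {V : Type} {E : V → V → Prop} {Vi : Set V}

lemma Play.mono (α : Play V E) {n : ℕ} (h : α.f n = none) : ∀ m, n ≤ m → α.f m = none := by
  intro m hm
  induction m with
  | zero => exact (Nat.le_zero.mp hm) ▸ h
  | succ m ih =>
    rcases Nat.lt_or_ge n (m+1) with h1 | h1
    · exact α.closed m (ih (by omega))
    · have : n = m + 1 := by omega
      exact this ▸ h

lemma Play.somebelow (α : Play V E) {n m : ℕ} (h : α.f m ≠ none) (hm : n ≤ m) :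
    α.f n ≠ none := fun hn => h (α.mono hn m hm)

/-- The tail of a play. -/
def Play.tail (α : Play V E) (k : ℕ) (h : α.f k ≠ none) : Play V E where
  f := fun n => α.f (k + n)
  first := Option.isSome_iff_ne_none.mpr h
  closed := fun n hn => α.closed (k + n) hn
  step := fun n u v hu hv => α.step (k + n) u v hu hv

@[simp] lemma Play.tail_f (α : Play V E) (k : ℕ) (h : α.f k ≠ none) (n : ℕ) :
    (α.tail k h).f n = α.f (k + n) := rfl

lemma Play.tail_isMax (α : Play V E) (k : ℕ) (h : α.f k ≠ none) (hm : α.IsMax) :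
    (α.tail k h).IsMax := by
  rcases hm with hinf | ⟨n, u, hn, hn1, hsink⟩
  · exact Or.inl fun m => hinf (k + m)
  · right
    have hkn : k ≤ n := by
      by_contra hk
      exact h (α.mono hn1 k (by omega))
    refine ⟨n - k, u, ?_, ?_, hsink⟩
    · rw [Play.tail_f]; rwa [show k + (n - k) = n by omega]
    · rw [Play.tail_f]; rwa [show k + (n - k + 1) = n + 1 by omega]

lemma Play.tail_follows (α : Play V E) (k : ℕ) (h : α.f k ≠ none) (s : PStrategy E Vi)
    (hf : α.Follows s) : (α.tail k h).Follows s := by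
  intro n u v hn hσ hne
  exact hf (k + n) u v hn hσ hne

lemma infOcc_tail (χ : V → ℕ) (α : Play V E) (k : ℕ) (h : α.f k ≠ none) (c : ℕ) :
    InfOcc χ (α.tail k h) c ↔ InfOcc χ α c := by
  constructor
  · intro hio N
    obtain ⟨m, hm, u, hu, hc⟩ := hio N
    exact ⟨k + m, by omega, u, hu, hc⟩
  · intro hio N
    obtain ⟨m, hm, u, hu, hc⟩ := hio (N + k)
    refine ⟨m - k, by omega, u, ?_, hc⟩
    rw [Play.tail_f, show k + (m - k) = m by omega]; exact hu

lemma winsFor_tail (χ : V → ℕ) (oppSet : Set V) (par : ℕ) (α : Play V E)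
    (k : ℕ) (h : α.f k ≠ none)
    (hw : ParityWinsFor χ oppSet par (α.tail k h)) : ParityWinsFor χ oppSet par α := by
  rcases hw with ⟨n, u, hn, hn1, hu⟩ | ⟨hinf, c, hio, hpar, hmax⟩
  · exact Or.inl ⟨k + n, u, hn, hn1, hu⟩
  · refine Or.inr ⟨?_, c, (infOcc_tail χ α k h c).mp hio, hpar, ?_⟩
    · intro m
      rcases Nat.lt_or_ge m k with h1 | h1
      · exact α.somebelow h (by omega)
      · have := hinf (m - k)
        rwa [Play.tail_f, show k + (m - k) = m by omega] at this
    · intro c' hc'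
      exact hmax c' ((infOcc_tail χ α k h c').mpr hc')

/-- Prepend a vertex to a play. -/
def Play.cons (w : V) (α : Play V E) (hE : ∀ u, α.f 0 = some u → E w u) : Play V E where
  f := fun n => match n with | 0 => some w | n + 1 => α.f n
  first := rfl
  closed := fun k hk => by
    match k with
    | 0 => exact absurd hk (by exact fun h => nomatch h)
    | k + 1 => exact α.closed k hk
  step := fun k u v hu hv => by
    match k with
    | 0 =>
      have : w = u := Option.some.inj hu
      subst this
      exact hE v hv
    | k + 1 => exact α.step k u v hu hv

@[simp] lemma Play.cons_f_zero (w : V) (α : Play V E) (hE) :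
    (Play.cons w α hE).f 0 = some w := rfl

@[simp] lemma Play.cons_f_succ (w : V) (α : Play V E) (hE) (n : ℕ) :
    (Play.cons w α hE).f (n + 1) = α.f n := rfl

lemma Play.cons_isMax (w : V) (α : Play V E) (hE) (hm : α.IsMax) :
    (Play.cons w α hE).IsMax := by
  rcases hm with hinf | ⟨n, u, hn, hn1, hsink⟩
  · refine Or.inl fun k => ?_
    match k with
    | 0 => exact fun h => nomatch h
    | k + 1 => exact hinf k
  · exact Or.inr ⟨n + 1, u, hn, hn1, hsink⟩

lemma Play.cons_follows (w : V) (α : Play V E) (hE) (s : PStrategy E Vi)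
    (hf : α.Follows s) (hw : ∀ v, s.σ w = some v → α.f 0 = some v) :
    (Play.cons w α hE).Follows s := by
  intro k u v hk hσ hne
  match k with
  | 0 =>
    have : w = u := Option.some.inj hk
    subst this
    exact hw v hσ
  | k + 1 => exact hf k u v hk hσ hne

lemma infOcc_cons (χ : V → ℕ) (w : V) (α : Play V E) (hE) (c : ℕ) :
    InfOcc χ (Play.cons w α hE) c ↔ InfOcc χ α c := by
  constructor
  · intro hio N
    obtain ⟨m, hm, u, hu, hc⟩ := hio (N + 1)
    match m, hm with
    | m + 1, hm => exact ⟨m, by omega, u, hu, hc⟩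
  · intro hio N
    obtain ⟨m, hm, u, hu, hc⟩ := hio N
    exact ⟨m + 1, by omega, u, hu, hc⟩

lemma winsFor_cons (χ : V → ℕ) (oppSet : Set V) (par : ℕ) (w : V) (α : Play V E) (hE)
    (hw : ParityWinsFor χ oppSet par (Play.cons w α hE)) : ParityWinsFor χ oppSet par α := by
  rcases hw with ⟨n, u, hn, hn1, hu⟩ | ⟨hinf, c, hio, hpar, hmax⟩
  · match n, hn, hn1 with
    | 0, hn, hn1 =>
      exfalso
      have h0 := α.first
      have : α.f 0 = none := hn1
      rw [this] at h0; exact Bool.noConfusion h0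
    | n + 1, hn, hn1 => exact Or.inl ⟨n, u, hn, hn1, hu⟩
  · refine Or.inr ⟨fun k => hinf (k + 1), c, (infOcc_cons χ w α hE c).mp hio, hpar, ?_⟩
    intro c' hc'
    exact hmax c' ((infOcc_cons χ w α hE c').mpr hc')

end GroupA
-- Group B : strategy surgery
section GroupB
open Classical
variable {V : Type} {E : V → V → Prop} {Vi : Set V}

/-- Vertices reachable from the support of `s` by moves consistent with `s`. -/
inductive Reach (s : PStrategy E Vi) : V → Prop
  | base {v} : v ∈ s.W → Reach s v
  | move {w v} : Reach s w → s.σ w = some v → Reach s v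
  | free {w v} : Reach s w → s.σ w = none → E w v → Reach s v

/-- Enlarge the support of a strategy to everything reachable. -/
def PStrategy.close (s : PStrategy E Vi) : PStrategy E Vi where
  W := {v | Reach s v}
  σ := s.σ
  dom := fun w v h => ⟨Reach.base (s.dom w v h).1, (s.dom w v h).2.1, (s.dom w v h).2.2.1,
    Reach.base (s.dom w v h).2.2.2⟩

def PStrategy.Closed (s : PStrategy E Vi) : Prop :=
  ∀ w ∈ s.W, s.σ w = none → ∀ v, E w v → v ∈ s.W

def PStrategy.Total (s : PStrategy E Vi) : Prop :=
  ∀ w ∈ s.W, w ∈ Vi → (∃ v, E w v) → (s.σ w).isSome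

lemma close_closed (s : PStrategy E Vi) : s.close.Closed := by
  intro w hw hσ v hE
  exact Reach.free hw hσ hE

lemma close_closed' (s : PStrategy E Vi) {w v : V} (hw : w ∈ s.close.W)
    (hσ : s.σ w = some v) : v ∈ s.close.W := Reach.move hw hσ

variable {C Ci : Set (Play V E)} {χ : V → ℕ}
variable (hCmax : ∀ α : Play V E, α.IsMax → α ∈ C)
variable (hCmem : ∀ α ∈ C, Play.IsMax α)
variable (hCitail : ∀ (α : Play V E) k (h : α.f k ≠ none), α.IsMax → α.tail k h ∈ Ci → α ∈ Ci)
variable (hCicons : ∀ w (α : Play V E) hE, α.IsMax → Play.cons w α hE ∈ Ci → α ∈ Ci)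

include hCmax hCmem hCicons in
lemma close_winning (s : PStrategy E Vi) (hs : s.Winning C Ci) :
    s.close.Winning C Ci := by
  have key : ∀ u, Reach s u → ∀ α ∈ C, α.f 0 = some u → α.Follows s → α ∈ Ci := by
    intro u hu
    induction hu with
    | base hv => exact fun α hαC h0 hf => hs α hαC ⟨_, h0, hv⟩ hf
    | @move w v hw hσ ih =>
      intro α hαC h0 hf
      have hE : ∀ u', α.f 0 = some u' → E w u' := by
        intro u' h0'
        rw [h0] at h0'
        cases Option.some.inj h0'
        exact (s.dom w v hσ).2.2.1
      have hcf : (Play.cons w α hE).Follows s := by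
        refine Play.cons_follows w α hE s hf ?_
        intro v' hσ'
        rw [hσ] at hσ'
        cases Option.some.inj hσ'
        exact h0
      have hmax : α.IsMax := hCmem α hαC
      have hγC : Play.cons w α hE ∈ C := hCmax _ (Play.cons_isMax w α hE hmax)
      have := ih (Play.cons w α hE) hγC rfl hcf
      exact hCicons w α hE hmax this
    | @free w v hw hσ hE0 ih =>
      intro α hαC h0 hf
      have hE : ∀ u', α.f 0 = some u' → E w u' := by
        intro u' h0'
        rw [h0] at h0'
        cases Option.some.inj h0'
        exact hE0
      have hcf : (Play.cons w α hE).Follows s := by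
        refine Play.cons_follows w α hE s hf ?_
        intro v' hσ'
        rw [hσ] at hσ'
        exact nomatch hσ'
      have hmax : α.IsMax := hCmem α hαC
      have hγC : Play.cons w α hE ∈ C := hCmax _ (Play.cons_isMax w α hE hmax)
      exact hCicons w α hE hmax (ih (Play.cons w α hE) hγC rfl hcf)
  intro α hαC ⟨u, h0, hu⟩ hf
  exact key u hu α hαC h0 hf


/-- Make the strategy total on its support (requires a closed support). -/
noncomputable def PStrategy.totalize (s : PStrategy E Vi) (hcl : s.Closed) :
    PStrategy E Vi where
  W := s.W
  σ := fun w =>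
    if h : w ∈ s.W ∧ w ∈ Vi ∧ s.σ w = none ∧ ∃ v, E w v then some h.2.2.2.choose
    else s.σ w
  dom := by
    intro w v h
    by_cases hc : w ∈ s.W ∧ w ∈ Vi ∧ s.σ w = none ∧ ∃ v, E w v
    · rw [dif_pos hc] at h
      cases Option.some.inj h
      exact ⟨hc.1, hc.2.1, hc.2.2.2.choose_spec, hcl w hc.1 hc.2.2.1 _ hc.2.2.2.choose_spec⟩
    · rw [dif_neg hc] at h
      exact s.dom w v h

lemma totalize_W (s : PStrategy E Vi) (hcl : s.Closed) : (s.totalize hcl).W = s.W := rfl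

lemma totalize_extends (s : PStrategy E Vi) (hcl : s.Closed) {w v : V}
    (h : s.σ w = some v) : (s.totalize hcl).σ w = some v := by
  show (if h : w ∈ s.W ∧ w ∈ Vi ∧ s.σ w = none ∧ ∃ v, E w v then some h.2.2.2.choose
    else s.σ w) = some v
  rw [dif_neg]
  · exact h
  · rintro ⟨-, -, h2, -⟩
    rw [h] at h2
    exact nomatch h2

lemma totalize_total (s : PStrategy E Vi) (hcl : s.Closed) : (s.totalize hcl).Total := by
  intro w hw hVi hex
  by_cases h2 : s.σ w = none
  · show (if h : w ∈ s.W ∧ w ∈ Vi ∧ s.σ w = none ∧ ∃ v, E w v then some h.2.2.2.choose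
      else s.σ w).isSome
    rw [dif_pos ⟨hw, hVi, h2, hex⟩]
    rfl
  · obtain ⟨v, hv⟩ := Option.ne_none_iff_exists'.mp h2
    rw [totalize_extends s hcl hv]
    rfl

lemma totalize_closed (s : PStrategy E Vi) (hcl : s.Closed) : (s.totalize hcl).Closed := by
  intro w hw hσ v hE
  by_cases hc : w ∈ s.W ∧ w ∈ Vi ∧ s.σ w = none ∧ ∃ v, E w v
  · exfalso
    have : (s.totalize hcl).σ w = some hc.2.2.2.choose := by
      show (if h : w ∈ s.W ∧ w ∈ Vi ∧ s.σ w = none ∧ ∃ v, E w v then some h.2.2.2.choose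
        else s.σ w) = _
      rw [dif_pos hc]
    rw [hσ] at this
    exact nomatch this
  · have h2 : (s.totalize hcl).σ w = s.σ w := by
      unfold PStrategy.totalize
      simp only
      rw [dif_neg hc]
    rw [hσ] at h2
    exact hcl w hw h2.symm v hE

lemma totalize_winning (s : PStrategy E Vi) (hcl : s.Closed) (hs : s.Winning C Ci) :
    (s.totalize hcl).Winning C Ci := by
  intro α hαC h0 hf
  refine hs α hαC h0 ?_
  intro k u v hk hσ hne
  exact hf k u v hk (totalize_extends s hcl hσ) hne

include hCmax hCmem hCicons in
/-- Every winning strategy extends to a closed, total winning strategy. -/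
lemma normalizeStrat (s : PStrategy E Vi) (hs : s.Winning C Ci) :
    ∃ t : PStrategy E Vi, t.Winning C Ci ∧ s.W ⊆ t.W ∧ t.Closed ∧ t.Total := by
  refine ⟨s.close.totalize (close_closed s), ?_, ?_, totalize_closed _ _, totalize_total _ _⟩
  · exact totalize_winning _ _ (close_winning hCmax hCmem hCicons s hs)
  · intro v hv
    exact Reach.base hv

end GroupB
-- Group B2 : uniformization
section GroupB2
open Classical
variable {V : Type} {E : V → V → Prop} {Vi : Set V} {C Ci : Set (Play V E)}
variable (hCmax : ∀ α : Play V E, α.IsMax → α ∈ C)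
variable (hCmem : ∀ α ∈ C, Play.IsMax α)
variable (hCitail : ∀ (α : Play V E) k (h : α.f k ≠ none), α.IsMax → α.tail k h ∈ Ci → α ∈ Ci)
variable (hCicons : ∀ w (α : Play V E) hE, α.IsMax → Play.cons w α hE ∈ Ci → α ∈ Ci)

include hCmax hCmem hCitail hCicons in
/-- Uniformization: there is a single winning strategy whose support is the
whole winning region, and it is closed and total. -/
theorem uniform_winning :
    ∃ sX : PStrategy E Vi, sX.Winning C Ci ∧ sX.W = {v | WinsAt E Vi C Ci v} ∧
      sX.Closed ∧ sX.Total := by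
  set X : Set V := {v | WinsAt E Vi C Ci v} with hX
  have hchoice : ∀ v : V, ∃ t : PStrategy E Vi,
      v ∈ X → t.Winning C Ci ∧ v ∈ t.W ∧ t.Closed ∧ t.Total := by
    intro v
    by_cases hv : v ∈ X
    · obtain ⟨s, hs, hvs⟩ := hv
      obtain ⟨t, htw, hsub, hcl, hto⟩ := normalizeStrat hCmax hCmem hCicons s hs
      exact ⟨t, fun _ => ⟨htw, hsub hvs, hcl, hto⟩⟩
    · exact ⟨⟨∅, fun _ => none, fun w v h => nomatch h⟩, fun h => absurd h hv⟩
  choose t ht using hchoice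
  have hsupX : ∀ v, v ∈ X → ∀ w ∈ (t v).W, w ∈ X := by
    intro v hv w hw
    exact ⟨t v, (ht v hv).1, hw⟩
  let r := WellOrderingRel (α := V)
  have wf : WellFounded r := IsWellFounded.wf
  set S : V → Set V := fun u => {v | v ∈ X ∧ u ∈ (t v).W} with hS
  have hSne : ∀ u, u ∈ X → (S u).Nonempty := fun u hu => ⟨u, hu, (ht u hu).2.1⟩
  set ℓ : V → V := fun u => if hu : u ∈ X then wf.min (S u) (hSne u hu) else u with hℓ
  have hℓmem : ∀ u (hu : u ∈ X), ℓ u ∈ X ∧ u ∈ (t (ℓ u)).W := by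
    intro u hu
    have h1 := wf.min_mem (S u) (hSne u hu)
    have h2 : ℓ u = wf.min (S u) (hSne u hu) := by rw [hℓ]; dsimp only; rw [dif_pos hu]
    rw [h2]
    exact h1
  have hℓle : ∀ u (hu : u ∈ X) v, v ∈ X → u ∈ (t v).W → ¬ r v (ℓ u) := by
    intro u hu v hv hvw
    have h1 := wf.not_lt_min (S u) (⟨hv, hvw⟩ : v ∈ S u)
    have h2 : ℓ u = wf.min (S u) (hSne u hu) := by rw [hℓ]; dsimp only; rw [dif_pos hu]
    rw [h2]
    exact h1
  set σX : V → Option V := fun u => if u ∈ X then (t (ℓ u)).σ u else none with hσX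
  have hσXd : ∀ u, u ∈ X → σX u = (t (ℓ u)).σ u := by
    intro u hu; rw [hσX]; dsimp only; exact if_pos hu
  refine ⟨⟨X, σX, ?_⟩, ?_, rfl, ?_, ?_⟩
  · -- dom
    intro w v h
    by_cases hw : w ∈ X
    · rw [hσXd w hw] at h
      have hd := (t (ℓ w)).dom w v h
      exact ⟨hw, hd.2.1, hd.2.2.1, hsupX (ℓ w) (hℓmem w hw).1 v hd.2.2.2⟩
    · have h' : σX w = some v := h
      rw [hσX] at h'; dsimp only at h'; rw [if_neg hw] at h'
      exact nomatch h'
  · -- Winning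
    intro α hαC ⟨u₀, h0, hu₀⟩ hf
    have hmax : α.IsMax := hCmem α hαC
    have key : ∀ k w u, α.f k = some w → w ∈ X → α.f (k+1) = some u → u ∈ (t (ℓ w)).W := by
      intro k w u hk hwX hk1
      cases h : (t (ℓ w)).σ w with
      | none =>
        exact ((ht (ℓ w) (hℓmem w hwX).1).2.2.1) w (hℓmem w hwX).2 h u (α.step k w u hk hk1)
      | some z =>
        have h2 : σX w = some z := by rw [hσXd w hwX]; exact h
        have h3 := hf k w z hk h2 (by rw [hk1]; exact fun hc => nomatch hc)
        rw [hk1] at h3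
        cases Option.some.inj h3
        exact ((t (ℓ w)).dom w u h).2.2.2
    have posX : ∀ k u, α.f k = some u → u ∈ X := by
      intro k
      induction k with
      | zero => intro u h; rw [h0] at h; cases Option.some.inj h; exact hu₀
      | succ k ih =>
        intro u h
        have hk : α.f k ≠ none := fun hn => by
          rw [α.closed k hn] at h; exact nomatch h
        obtain ⟨w, hw⟩ := Option.ne_none_iff_exists'.mp hk
        exact hsupX (ℓ w) (hℓmem w (ih w hw)).1 u (key k w u hw (ih w hw) h)
    rcases hmax with hinf | ⟨n, u, hn, hn1, hsink⟩
    · -- infinite play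
      have hpos : ∀ k, ∃ u, α.f k = some u := fun k => Option.ne_none_iff_exists'.mp (hinf k)
      choose pos hposf using hpos
      have hposX : ∀ k, pos k ∈ X := fun k => posX k (pos k) (hposf k)
      set L : ℕ → V := fun k => ℓ (pos k) with hL
      have hmono : ∀ k, ¬ r (L k) (L (k+1)) := by
        intro k
        exact hℓle (pos (k+1)) (hposX (k+1)) (L k) (hℓmem (pos k) (hposX k)).1
          (key k (pos k) (pos (k+1)) (hposf k) (hposX k) (hposf (k+1)))
      obtain ⟨k₀, hk₀⟩ : ∃ k₀, L k₀ = wf.min (Set.range L) (Set.range_nonempty L) := by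
        have := wf.min_mem (Set.range L) (Set.range_nonempty L)
        obtain ⟨k₀, hk₀⟩ := this
        exact ⟨k₀, hk₀⟩
      set m := wf.min (Set.range L) (Set.range_nonempty L) with hm
      have hconst : ∀ k, k₀ ≤ k → L k = m := by
        intro k hk
        induction k with
        | zero => cases Nat.le_zero.mp hk; exact hk₀
        | succ k ih =>
          rcases Nat.lt_or_ge k₀ (k+1) with h1 | h1
          · have h2 := ih (by omega)
            have h3 : ¬ r m (L (k+1)) := h2 ▸ hmono k
            have h4 : ¬ r (L (k+1)) m := wf.not_lt_min (Set.range L) ⟨k+1, rfl⟩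
            rcases trichotomous_of r (L (k+1)) m with h | h | h
            · exact absurd h h4
            · exact h
            · exact absurd h h3
          · have : k₀ = k + 1 := by omega
            exact this ▸ hk₀
      have hmX : m ∈ X := hk₀ ▸ (hℓmem (pos k₀) (hposX k₀)).1
      set β := α.tail k₀ (hinf k₀) with hβ
      have hβC : β ∈ C := hCmax β (α.tail_isMax k₀ (hinf k₀) (Or.inl hinf))
      have hβ0 : β.f 0 = some (pos k₀) := by rw [hβ, Play.tail_f]; exact hposf k₀
      have hβW : pos k₀ ∈ (t m).W := by
        have := (hℓmem (pos k₀) (hposX k₀)).2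
        rwa [show ℓ (pos k₀) = m from hk₀] at this
      have hβF : β.Follows (t m) := by
        intro j a b hj hσ hne
        rw [hβ, Play.tail_f] at hj
        rw [hposf (k₀ + j)] at hj
        cases Option.some.inj hj
        have hla : ℓ (pos (k₀ + j)) = m := hconst (k₀ + j) (by omega)
        have h2 : σX (pos (k₀ + j)) = some b := by
          rw [hσXd _ (hposX (k₀ + j)), hla]; exact hσ
        exact hf (k₀ + j) (pos (k₀+j)) b (hposf (k₀+j)) h2 (hinf (k₀+j+1))
      have := (ht m hmX).1 β hβC ⟨pos k₀, hβ0, hβW⟩ hβF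
      exact hCitail α k₀ (hinf k₀) (Or.inl hinf) this
    · -- finite play
      have huX : u ∈ X := posX n u hn
      have hn' : α.f n ≠ none := by rw [hn]; exact fun h => nomatch h
      set β := α.tail n hn' with hβ
      have hβC : β ∈ C := hCmax β (α.tail_isMax n hn' (Or.inr ⟨n, u, hn, hn1, hsink⟩))
      have hβF : β.Follows (t (ℓ u)) := by
        intro j a b hj hσ hne
        exfalso
        apply hne
        rw [hβ, Play.tail_f]
        exact α.mono hn1 (n + (j+1)) (by omega)
      have hβ0 : β.f 0 = some u := by rw [hβ, Play.tail_f]; exact hn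
      have := (ht (ℓ u) (hℓmem u huX).1).1 β hβC ⟨u, hβ0, (hℓmem u huX).2⟩ hβF
      exact hCitail α n hn' (Or.inr ⟨n, u, hn, hn1, hsink⟩) this
  · -- Closed
    intro w hw hσ v hE
    have hσ' : σX w = none := hσ
    rw [hσXd w hw] at hσ'
    have hσ := hσ'
    exact hsupX (ℓ w) (hℓmem w hw).1 v
      (((ht (ℓ w) (hℓmem w hw).1).2.2.1) w (hℓmem w hw).2 hσ v hE)
  · -- Total
    intro w hw hVi hex
    have h1 := ((ht (ℓ w) (hℓmem w hw).1).2.2.2) w (hℓmem w hw).2 hVi hex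
    show (σX w).isSome = true
    rw [hσXd w hw]
    exact h1

end GroupB2
-- Group M : every maximal play is won by somebody; region closure lemmas
section GroupM
open Classical
variable {V : Type} {E : V → V → Prop}

lemma exists_max_infOcc (χ : V → ℕ) (D : ℕ) (hb : ∀ v, χ v ≤ D) (α : Play V E)
    (hinf : ∀ k, α.f k ≠ none) :
    ∃ c, InfOcc χ α c ∧ ∀ c', InfOcc χ α c' → c' ≤ c := by
  have hpos : ∀ k, ∃ u, α.f k = some u := fun k => Option.ne_none_iff_exists'.mp (hinf k)
  choose pos hposf using hpos
  have hTsub : ∀ c, InfOcc χ α c → c ≤ D := by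
    intro c hc
    obtain ⟨k, -, u, -, hu⟩ := hc 0
    exact hu ▸ hb u
  have hTne : ∃ c, InfOcc χ α c := by
    by_contra hno
    push_neg at hno
    have hN : ∀ c, ∃ N, ∀ k, N ≤ k → ∀ u, α.f k = some u → χ u ≠ c := by
      intro c
      have := hno c
      unfold InfOcc at this
      push_neg at this
      obtain ⟨N, hN⟩ := this
      exact ⟨N, fun k hk u hu hc => (hN k hk) u hu hc⟩
    choose N hNs using hN
    set M := (Finset.range (D + 1)).sup N with hM
    have hc : χ (pos M) ≤ D := hb _
    refine hNs (χ (pos M)) M ?_ (pos M) (hposf M) rfl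
    exact Finset.le_sup (Finset.mem_range.mpr (by omega))
  obtain ⟨c₀, hc₀⟩ := hTne
  set S : Finset ℕ := (Finset.range (D + 1)).filter (fun c => InfOcc χ α c) with hS
  have hSne : S.Nonempty :=
    ⟨c₀, Finset.mem_filter.mpr ⟨Finset.mem_range.mpr (by have := hTsub c₀ hc₀; omega), hc₀⟩⟩
  refine ⟨S.max' hSne, (Finset.mem_filter.mp (S.max'_mem hSne)).2, ?_⟩
  intro c' hc'
  exact S.le_max' c' (Finset.mem_filter.mpr
    ⟨Finset.mem_range.mpr (by have := hTsub c' hc'; omega), hc'⟩)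

/-- Every maximal play is won by one of the two players. -/
lemma maxPlay_wins (χ : V → ℕ) (P O : Set V) (a b D : ℕ)
    (hcov : ∀ v, v ∈ P ∨ v ∈ O) (hb : ∀ v, χ v ≤ D)
    (hab : ∀ c : ℕ, c % 2 = a ∨ c % 2 = b)
    (α : Play V E) (hmax : α.IsMax) :
    α ∈ ParityWinSet E χ O a ∪ ParityWinSet E χ P b := by
  rcases hmax with hinf | hfin
  · obtain ⟨c, hc, hcmax⟩ := exists_max_infOcc χ D hb α hinf
    rcases hab c with hpar | hpar
    · exact Or.inl ⟨Or.inl hinf, Or.inr ⟨hinf, c, hc, hpar, hcmax⟩⟩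
    · exact Or.inr ⟨Or.inl hinf, Or.inr ⟨hinf, c, hc, hpar, hcmax⟩⟩
  · obtain ⟨n, u, hn, hn1, hsink⟩ := hfin
    rcases hcov u with hu | hu
    · exact Or.inr ⟨Or.inr ⟨n, u, hn, hn1, hsink⟩, Or.inl ⟨n, u, hn, hn1, hu⟩⟩
    · exact Or.inl ⟨Or.inr ⟨n, u, hn, hn1, hsink⟩, Or.inl ⟨n, u, hn, hn1, hu⟩⟩

variable {Vi : Set V} {C Ci : Set (Play V E)}
variable (hCmax : ∀ α : Play V E, α.IsMax → α ∈ C)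
variable (hCmem : ∀ α ∈ C, Play.IsMax α)
variable (hCitail : ∀ (α : Play V E) k (h : α.f k ≠ none), α.IsMax → α.tail k h ∈ Ci → α ∈ Ci)

include hCmem in
/-- Sinks of the opponent belong to the winning region. -/
lemma winsAt_sink (χ : V → ℕ) (oppSet : Set V) (par : ℕ) {v : V}
    (hv : v ∈ oppSet) (hsink : ∀ w, ¬ E v w) :
    WinsAt E Vi C (ParityWinSet E χ oppSet par) v := by
  refine ⟨⟨{v}, fun _ => none, fun w z h => nomatch h⟩, ?_, rfl⟩
  rintro α hαC ⟨u, h0, hu⟩ -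
  have huv : u = v := hu
  subst huv
  refine ⟨hCmem α hαC, Or.inl ⟨0, u, h0, ?_, hv⟩⟩
  cases h1 : α.f 1 with
  | none => rfl
  | some w => exact absurd (α.step 0 u w h0 h1) (hsink w)

include hCmax hCmem hCitail in
/-- A player's vertex with a move into the winning region is in the winning region. -/
lemma winsAt_step {v u : V} (hv : v ∈ Vi) (hE : E v u)
    (hu : WinsAt E Vi C Ci u) : WinsAt E Vi C Ci v := by
  obtain ⟨s, hs, hus⟩ := hu
  by_cases hvW : v ∈ s.W
  · exact ⟨s, hs, hvW⟩
  have hσv : s.σ v = none := by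
    cases h : s.σ v with
    | none => rfl
    | some z => exact absurd ((s.dom v z h).1) hvW
  refine ⟨⟨s.W ∪ {v}, fun w => if w = v then some u else s.σ w, ?_⟩, ?_, Or.inr rfl⟩
  · intro w z h
    by_cases hwv : w = v
    · subst hwv
      rw [if_pos rfl] at h
      cases Option.some.inj h
      exact ⟨Or.inr rfl, hv, hE, Or.inl hus⟩
    · rw [if_neg hwv] at h
      have hd := s.dom w z h
      exact ⟨Or.inl hd.1, hd.2.1, hd.2.2.1, Or.inl hd.2.2.2⟩
  · rintro α hαC ⟨w₀, h0, hw₀⟩ hfol'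
    have hfs : α.Follows s := by
      intro k w z hk hσ hne
      have hwv : w ≠ v := fun h => hvW (h ▸ (s.dom w z hσ).1)
      refine hfol' k w z hk ?_ hne
      show (fun w => if w = v then some u else s.σ w) w = some z
      dsimp only
      rw [if_neg hwv]; exact hσ
    rcases hw₀ with hw₀ | hw₀
    · exact hs α hαC ⟨w₀, h0, hw₀⟩ hfs
    · have hw₀v : w₀ = v := hw₀
      rw [hw₀v] at h0
      have hmax := hCmem α hαC
      have h1ne : α.f 1 ≠ none := by
        intro h1
        rcases hmax with hinf | ⟨n, u', hn, hn1, hsink⟩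
        · exact hinf 1 h1
        · have hn0 : n = 0 := by
            by_contra hne0
            have := α.mono h1 n (by omega)
            rw [this] at hn; exact nomatch hn
          subst hn0
          rw [h0] at hn
          cases Option.some.inj hn
          exact hsink u hE
      have h1 : α.f 1 = some u := by
        refine hfol' 0 v u h0 ?_ h1ne
        show (fun w => if w = v then some u else s.σ w) v = some u
        dsimp only
        rw [if_pos rfl]
      have htail := hs (α.tail 1 h1ne) (hCmax _ (α.tail_isMax 1 h1ne hmax))
        ⟨u, h1, hus⟩ (α.tail_follows 1 h1ne s hfs)
      exact hCitail α 1 h1ne hmax htail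

include hCmax hCmem hCitail in
/-- An opponent vertex all of whose moves go into the winning region is in the
winning region. -/
lemma winsAt_allsucc (hCicons : ∀ w (α : Play V E) hE, α.IsMax →
      Play.cons w α hE ∈ Ci → α ∈ Ci)
    {v : V} (hnsink : ∃ w, E v w) (hall : ∀ u, E v u → WinsAt E Vi C Ci u) :
    WinsAt E Vi C Ci v := by
  obtain ⟨sX, hsX, hXW, hXcl, hXto⟩ := uniform_winning hCmax hCmem hCitail hCicons
    (Vi := Vi) (C := C) (Ci := Ci)
  refine ⟨⟨sX.W ∪ {v}, sX.σ, ?_⟩, ?_, Or.inr rfl⟩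
  · intro w z h
    have hd := sX.dom w z h
    exact ⟨Or.inl hd.1, hd.2.1, hd.2.2.1, Or.inl hd.2.2.2⟩
  · rintro α hαC ⟨w₀, h0, hw₀⟩ hfol
    have hfolX : α.Follows sX := hfol
    rcases hw₀ with hw₀ | hw₀
    · exact hsX α hαC ⟨w₀, h0, hw₀⟩ hfolX
    · have hw₀v : w₀ = v := hw₀
      rw [hw₀v] at h0
      have hmax := hCmem α hαC
      have h1ne : α.f 1 ≠ none := by
        intro h1
        rcases hmax with hinf | ⟨n, u', hn, hn1, hsink⟩
        · exact hinf 1 h1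
        · have hn0 : n = 0 := by
            by_contra hne0
            have := α.mono h1 n (by omega)
            rw [this] at hn; exact nomatch hn
          subst hn0
          rw [h0] at hn
          cases Option.some.inj hn
          obtain ⟨w, hw⟩ := hnsink
          exact hsink w hw
      obtain ⟨u₁, hu₁⟩ := Option.ne_none_iff_exists'.mp h1ne
      have hu₁X : u₁ ∈ sX.W := by
        rw [hXW]
        exact hall u₁ (α.step 0 v u₁ h0 hu₁)
      have htail := hsX (α.tail 1 h1ne) (hCmax _ (α.tail_isMax 1 h1ne hmax))
        ⟨u₁, hu₁, hu₁X⟩ (α.tail_follows 1 h1ne sX hfolX)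
      exact hCitail α 1 h1ne hmax htail

end GroupM
-- Group C : attractors via ordinal stages
section GroupC
open Classical
variable {V : Type} (E : V → V → Prop) (P O U N : Set V)

/-- Stages of the attractor of player `P` towards `N` inside `U`. -/
noncomputable def attrStage : Ordinal.{0} → Set V :=
  Ordinal.lt_wf.fix fun α ih =>
    N ∪ {v | v ∈ U ∧ v ∈ P ∧ ∃ u, E v u ∧ ∃ β, ∃ h : β < α, u ∈ ih β h}
      ∪ {v | v ∈ U ∧ v ∈ O ∧ (∃ w, E v w) ∧ ∀ u, E v u → ∃ β, ∃ h : β < α, u ∈ ih β h}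

lemma attrStage_eq (α : Ordinal.{0}) :
    attrStage E P O U N α =
      N ∪ {v | v ∈ U ∧ v ∈ P ∧ ∃ u, E v u ∧ ∃ β, ∃ _ : β < α, u ∈ attrStage E P O U N β}
        ∪ {v | v ∈ U ∧ v ∈ O ∧ (∃ w, E v w) ∧
            ∀ u, E v u → ∃ β, ∃ _ : β < α, u ∈ attrStage E P O U N β} := by
  show Ordinal.lt_wf.fix _ α = _
  rw [WellFounded.fix_eq]
  rfl

/-- The attractor. -/
def Attr : Set V := {v | ∃ α, v ∈ attrStage E P O U N α}

/-- The rank of a vertex in the attractor. -/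
noncomputable def attrRank (v : V) : Ordinal.{0} :=
  sInf {α | v ∈ attrStage E P O U N α}

variable {E P O U N}

lemma N_sub_attrStage (α : Ordinal.{0}) : N ⊆ attrStage E P O U N α := by
  rw [attrStage_eq]; intro v hv; exact Or.inl (Or.inl hv)

lemma N_sub_attr : N ⊆ Attr E P O U N := fun v hv => ⟨0, N_sub_attrStage 0 hv⟩

lemma attrStage_sub_U (hNU : N ⊆ U) (α : Ordinal.{0}) : attrStage E P O U N α ⊆ U := by
  rw [attrStage_eq]
  rintro v ((hv | hv) | hv)
  · exact hNU hv
  · exact hv.1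
  · exact hv.1

lemma attr_sub_U (hNU : N ⊆ U) : Attr E P O U N ⊆ U := by
  rintro v ⟨α, hα⟩; exact attrStage_sub_U hNU α hα

lemma mem_attrStage_rank {v : V} (hv : v ∈ Attr E P O U N) :
    v ∈ attrStage E P O U N (attrRank E P O U N v) :=
  csInf_mem hv

lemma attrRank_le {v : V} {β : Ordinal.{0}} (h : v ∈ attrStage E P O U N β) :
    attrRank E P O U N v ≤ β := csInf_le' h

/-- Closure: a `P`-vertex in `U` with a move into the attractor is in the attractor. -/
lemma attr_closed_P {v u : V} (hU : v ∈ U) (hP : v ∈ P) (hE : E v u)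
    (hu : u ∈ Attr E P O U N) : v ∈ Attr E P O U N := by
  obtain ⟨α, hα⟩ := hu
  refine ⟨α + 1, ?_⟩
  rw [attrStage_eq]
  exact Or.inl (Or.inr ⟨hU, hP, u, hE, α, by rw [Ordinal.add_one_eq_succ]; exact Order.lt_succ α, hα⟩)

/-- Destructor for non-target attractor vertices. -/
lemma attr_dest {v : V} (hv : v ∈ Attr E P O U N) (hvN : v ∉ N) :
    (v ∈ U ∧ v ∈ P ∧ ∃ u, E v u ∧ u ∈ Attr E P O U N ∧
        attrRank E P O U N u < attrRank E P O U N v) ∨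
    (v ∈ U ∧ v ∈ O ∧ (∃ w, E v w) ∧ ∀ u, E v u → u ∈ Attr E P O U N ∧
        attrRank E P O U N u < attrRank E P O U N v) := by
  have h := mem_attrStage_rank hv
  rw [attrStage_eq] at h
  rcases h with (h | h) | h
  · exact absurd h hvN
  · obtain ⟨hU, hP, u, hE, β, hβ, hu⟩ := h
    exact Or.inl ⟨hU, hP, u, hE, ⟨β, hu⟩, lt_of_le_of_lt (attrRank_le hu) hβ⟩
  · obtain ⟨hU, hO, hns, hall⟩ := h
    refine Or.inr ⟨hU, hO, hns, fun u hE => ?_⟩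
    obtain ⟨β, hβ, hu⟩ := hall u hE
    exact ⟨⟨β, hu⟩, lt_of_le_of_lt (attrRank_le hu) hβ⟩

end GroupC
-- Group D : subgame translation
section GroupD
variable {V : Type} {E E' : V → V → Prop}

/-- View a play of `G` as a play of a subgame. -/
def Play.toSub (α : Play V E) (E' : V → V → Prop)
    (hstep : ∀ k u v, α.f k = some u → α.f (k + 1) = some v → E' u v) : Play V E' where
  f := α.f
  first := α.first
  closed := α.closed
  step := hstep

@[simp] lemma Play.toSub_f (α : Play V E) (E' : V → V → Prop) (hstep) (n : ℕ) :
    (α.toSub E' hstep).f n = α.f n := rfl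

lemma Play.toSub_isMax (α : Play V E) (E' : V → V → Prop) (hstep)
    (hE' : ∀ u v, E' u v → E u v) (hm : α.IsMax) : (α.toSub E' hstep).IsMax := by
  rcases hm with hinf | ⟨n, u, hn, hn1, hsink⟩
  · exact Or.inl hinf
  · exact Or.inr ⟨n, u, hn, hn1, fun w hw => hsink w (hE' u w hw)⟩

lemma Play.toSub_follows {Vi : Set V} (α : Play V E) (E' : V → V → Prop) (hstep)
    (t : PStrategy E' Vi)
    (h : ∀ k u v, α.f k = some u → t.σ u = some v → α.f (k + 1) ≠ none →
      α.f (k + 1) = some v) : (α.toSub E' hstep).Follows t := h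

lemma infOcc_toSub {χ χ' : V → ℕ} (α : Play V E) (E' : V → V → Prop) (hstep) (c : ℕ)
    (hχ : ∀ k u, α.f k = some u → χ' u = χ u) :
    InfOcc χ' (α.toSub E' hstep) c ↔ InfOcc χ α c := by
  constructor
  · intro h N
    obtain ⟨k, hk, u, hu, hc⟩ := h N
    exact ⟨k, hk, u, hu, by rw [← hχ k u hu]; exact hc⟩
  · intro h N
    obtain ⟨k, hk, u, hu, hc⟩ := h N
    exact ⟨k, hk, u, hu, by rw [hχ k u hu]; exact hc⟩

lemma winsFor_toSub {χ χ' : V → ℕ} (oppSet : Set V) (par : ℕ)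
    (α : Play V E) (E' : V → V → Prop) (hstep)
    (hχ : ∀ k u, α.f k = some u → χ' u = χ u)
    (hw : ParityWinsFor χ' oppSet par (α.toSub E' hstep)) :
    ParityWinsFor χ oppSet par α := by
  rcases hw with ⟨n, u, hn, hn1, hu⟩ | ⟨hinf, c, hc, hpar, hmax⟩
  · exact Or.inl ⟨n, u, hn, hn1, hu⟩
  · refine Or.inr ⟨hinf, c, (infOcc_toSub α E' hstep c hχ).mp hc, hpar, ?_⟩
    intro c' hc'
    exact hmax c' ((infOcc_toSub α E' hstep c' hχ).mpr hc')

end GroupD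
-- Group E : the main induction
section GroupE
open Classical

variable {V : Type}

/-- The set of all games, as the union of the two players' win sets. -/
def GameC (E : V → V → Prop) (χ : V → ℕ) (P Q : Set V) (a b : ℕ) : Set (Play V E) :=
  ParityWinSet E χ Q a ∪ ParityWinSet E χ P b

lemma gameC_mem {E : V → V → Prop} {χ : V → ℕ} {P Q : Set V} {a b : ℕ} :
    ∀ α ∈ GameC E χ P Q a b, Play.IsMax α := by
  rintro α (h | h) <;> exact h.1

lemma pws_tail {E : V → V → Prop} {χ : V → ℕ} {R : Set V} {c : ℕ} :
    ∀ (α : Play V E) k (h : α.f k ≠ none), α.IsMax →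
      α.tail k h ∈ ParityWinSet E χ R c → α ∈ ParityWinSet E χ R c :=
  fun α k h hm ht => ⟨hm, winsFor_tail χ R c α k h ht.2⟩

lemma pws_cons {E : V → V → Prop} {χ : V → ℕ} {R : Set V} {c : ℕ} :
    ∀ w (α : Play V E) hE, α.IsMax →
      Play.cons w α hE ∈ ParityWinSet E χ R c → α ∈ ParityWinSet E χ R c :=
  fun w α hE hm hc => ⟨hm, winsFor_cons χ R c w α hE hc.2⟩

/-- A one-position play. -/
def Play.single (E : V → V → Prop) (u : V) : Play V E where
  f := fun n => match n with | 0 => some u | _ + 1 => none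
  first := rfl
  closed := fun k hk => by
    match k with
    | 0 => exact absurd hk (fun h => nomatch h)
    | k + 1 => rfl
  step := fun k u' v hu hv => by
    match k with
    | 0 => exact absurd hv (fun h => nomatch h)
    | k + 1 => exact absurd hu (fun h => nomatch h)

lemma Play.single_isMax (E : V → V → Prop) (u : V) (hsink : ∀ w, ¬ E u w) :
    (Play.single E u).IsMax := Or.inr ⟨0, u, rfl, rfl, hsink⟩

lemma Play.single_follows {E : V → V → Prop} {Vi : Set V} (u : V) (t : PStrategy E Vi) :
    (Play.single E u).Follows t := by
  intro k a z hk hσ hne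
  exact absurd (show (Play.single E u).f (k+1) = none from rfl) hne

/-- The Zielonka induction step. -/
lemma mainStep (P Q : Set V) (a b : ℕ)
    (hcov : ∀ v, v ∈ P ∨ v ∈ Q) (hdisj : ∀ v, v ∈ P → v ∈ Q → False)
    (hab : ∀ c : ℕ, c % 2 = a ∨ c % 2 = b)
    (d : ℕ) (E : V → V → Prop) (χ : V → ℕ)
    (hχ : ∀ v, 1 ≤ χ v ∧ χ v ≤ d + 1) (hpar : (d + 1) % 2 = a)
    (IH : ∀ (E' : V → V → Prop) (χ' : V → ℕ), (∀ v, 1 ≤ χ' v ∧ χ' v ≤ d) →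
      ∀ v, WinsAt E' P (GameC E' χ' P Q a b) (ParityWinSet E' χ' Q a) v ∨
           WinsAt E' Q (GameC E' χ' P Q a b) (ParityWinSet E' χ' P b) v) :
    ∀ v, WinsAt E P (GameC E χ P Q a b) (ParityWinSet E χ Q a) v ∨
         WinsAt E Q (GameC E χ P Q a b) (ParityWinSet E χ P b) v := by
  set C : Set (Play V E) := GameC E χ P Q a b with hC
  set CiP : Set (Play V E) := ParityWinSet E χ Q a with hCiP
  set CiQ : Set (Play V E) := ParityWinSet E χ P b with hCiQ
  have hCmax : ∀ α : Play V E, α.IsMax → α ∈ C :=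
    fun α hm => maxPlay_wins χ P Q a b (d+1) hcov (fun v => (hχ v).2) hab α hm
  have hCmem : ∀ α ∈ C, Play.IsMax α := gameC_mem
  -- the opponent's region
  set X : Set V := {v | WinsAt E Q C CiQ v} with hX
  obtain ⟨sX, hsXwin, hsXW, hsXcl, hsXto⟩ :=
    uniform_winning (Vi := Q) (C := C) (Ci := CiQ) hCmax hCmem pws_tail pws_cons
  rw [← hX] at hsXW
  have hQstep : ∀ v ∈ Q, ∀ u, E v u → u ∈ X → v ∈ X :=
    fun v hv u hE hu => winsAt_step hCmax hCmem pws_tail hv hE hu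
  have hallsucc : ∀ v, (∃ w, E v w) → (∀ u, E v u → u ∈ X) → v ∈ X :=
    fun v hns hall => winsAt_allsucc hCmax hCmem pws_tail pws_cons hns hall
  have hsinkP : ∀ v ∈ P, (∀ w, ¬ E v w) → v ∈ X :=
    fun v hv hsink => winsAt_sink hCmem χ P b hv hsink
  set U : Set V := Xᶜ with hU
  have hPnsink : ∀ v, v ∈ U → v ∈ P → ∃ w, E v w := by
    intro v hvU hvP
    by_contra hno
    push_neg at hno
    exact hvU (hsinkP v hvP hno)
  have hPsuccU : ∀ v, v ∈ U → v ∈ P → ∃ u, E v u ∧ u ∈ U := by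
    intro v hvU hvP
    by_contra hno
    push_neg at hno
    refine hvU (hallsucc v (hPnsink v hvU hvP) ?_)
    intro u hE
    by_contra huX
    exact (hno u hE) huX
  have hQsuccU : ∀ v, v ∈ U → v ∈ Q → ∀ u, E v u → u ∈ U := by
    intro v hvU hvQ u hE
    by_contra huX
    exact hvU (hQstep v hvQ u hE (not_not.mp huX))
  -- the attractor towards the maximal color
  set N : Set V := {v | v ∈ U ∧ χ v = d + 1} with hN
  have hNU : N ⊆ U := fun v hv => hv.1
  set A : Set V := Attr E P Q U N with hA
  set rk : V → Ordinal.{0} := attrRank E P Q U N with hrk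
  have hAU : A ⊆ U := attr_sub_U hNU
  set S : Set V := U ∩ Aᶜ with hS
  have hSU : S ⊆ U := fun v hv => hv.1
  have hSA : ∀ v ∈ S, v ∉ A := fun v hv => hv.2
  have hAS : ∀ v ∈ A, v ∉ S := fun v hv hvS => hvS.2 hv
  have hUAS : ∀ v ∈ U, v ∉ A → v ∈ S := fun v hv hnA => ⟨hv, hnA⟩
  have hSd : ∀ v ∈ S, χ v ≤ d := by
    intro v hv
    have h1 := (hχ v).2
    by_contra hgt
    have : χ v = d + 1 := by omega
    exact hSA v hv (N_sub_attr ⟨hSU hv, this⟩)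
  set E' : V → V → Prop := fun u v => E u v ∧ u ∈ S ∧ v ∈ S with hE'
  have hE'E : ∀ u v, E' u v → E u v := fun u v h => h.1
  set χ' : V → ℕ := fun v => if v ∈ S then χ v else 1 with hχ'
  have hχ'S : ∀ v ∈ S, χ' v = χ v := fun v hv => if_pos hv
  set C' : Set (Play V E') := GameC E' χ' P Q a b with hC'
  set CiP' : Set (Play V E') := ParityWinSet E' χ' Q a with hCiP'
  set CiQ' : Set (Play V E') := ParityWinSet E' χ' P b with hCiQ'
  have hχ'bound : ∀ v, χ' v ≤ d + 1 := by
    intro v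
    rw [hχ']
    dsimp only
    by_cases hv : v ∈ S
    · rw [if_pos hv]; exact (hχ v).2
    · rw [if_neg hv]; omega
  have hCmax' : ∀ α : Play V E', α.IsMax → α ∈ C' :=
    fun α hm => maxPlay_wins χ' P Q a b (d+1) hcov hχ'bound hab α hm
  have hCmem' : ∀ α ∈ C', Play.IsMax α := gameC_mem
  -- uniform strategy for Q in the subgame
  obtain ⟨tQ, htQwin, htQW, htQcl, htQto⟩ :=
    uniform_winning (Vi := Q) (C := C') (Ci := CiQ') hCmax' hCmem' pws_tail pws_cons
  set Y : Set V := tQ.W with hY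
  -- Q-vertices in Y are not E'-sinks
  have hQnoSinkY : ∀ u ∈ Y, u ∈ Q → ∃ z, E' u z := by
    intro u huY huQ
    by_contra hno
    push_neg at hno
    have hsink : ∀ w, ¬ E' u w := fun w hw => (hno w) hw
    have hπ := htQwin (Play.single E' u)
      (hCmax' _ (Play.single_isMax E' u hsink)) ⟨u, rfl, huY⟩ (Play.single_follows u tQ)
    rcases hπ.2 with ⟨n, z, hn, hn1, hzP⟩ | ⟨hinf, -⟩
    · have hn0 : n = 0 := by
        match n, hn with
        | 0, hn => rfl
        | n + 1, hn => exact absurd hn (fun h => nomatch h)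
      subst hn0
      have : u = z := Option.some.inj hn
      subst this
      exact hdisj u hzP huQ
    · exact (hinf 1) rfl
  -- Claim 1 : subgame wins of Q extend to wins of Q in the full game
  have claim1 : ∀ v ∈ S, v ∈ Y → v ∈ X := by
    intro v hvS hvY
    set σc : V → Option V := fun u => if u ∈ S then tQ.σ u else sX.σ u with hσc
    have hσcS : ∀ u ∈ S, σc u = tQ.σ u := fun u hu => if_pos hu
    have hσcX : ∀ u ∈ X, σc u = sX.σ u := by
      intro u hu
      have : u ∉ S := fun hS' => (hSU hS') hu
      exact if_neg this
    have hdom : ∀ w z, σc w = some z → w ∈ (Y ∩ S) ∪ X ∧ w ∈ Q ∧ E w z ∧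
        z ∈ (Y ∩ S) ∪ X := by
      intro w z h
      by_cases hw : w ∈ S
      · rw [hσcS w hw] at h
        have hd := tQ.dom w z h
        exact ⟨Or.inl ⟨hd.1, hw⟩, hd.2.1, hd.2.2.1.1, Or.inl ⟨hd.2.2.2, hd.2.2.1.2.2⟩⟩
      · rw [hσc] at h; dsimp only at h; rw [if_neg hw] at h
        have hd := sX.dom w z h
        exact ⟨Or.inr (hsXW ▸ hd.1), hd.2.1, hd.2.2.1, Or.inr (hsXW ▸ hd.2.2.2)⟩
    set sComb : PStrategy E Q := ⟨(Y ∩ S) ∪ X, σc, hdom⟩ with hsComb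
    have hwin : sComb.Winning C CiQ := by
      rintro α hαC ⟨u₀, h0, hu₀⟩ hfol
      have hmax := hCmem α hαC
      -- one step from Y ∩ S stays in (Y ∩ S) ∪ X
      have fact1 : ∀ k u w, α.f k = some u → u ∈ Y ∩ S → α.f (k+1) = some w →
          w ∈ (Y ∩ S) ∪ X := by
        intro k u w hk hu hk1
        have hEuw : E u w := α.step k u w hk hk1
        cases hσ : tQ.σ u with
        | some z =>
          have h2 : σc u = some z := by rw [hσcS u hu.2]; exact hσ
          have h3 := hfol k u z hk h2 (by rw [hk1]; exact fun h => nomatch h)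
          rw [hk1] at h3
          cases Option.some.inj h3
          have hd := tQ.dom u w hσ
          exact Or.inl ⟨hd.2.2.2, hd.2.2.1.2.2⟩
        | none =>
          rcases hcov u with huP | huQ
          · -- P's vertex: moves to S (then into Y by closedness) or to X, never to A
            have hwnA : w ∉ A := by
              intro hwA
              exact hSA u hu.2 (attr_closed_P (hSU hu.2) huP hEuw hwA)
            by_cases hwX : w ∈ X
            · exact Or.inr hwX
            · have hwU : w ∈ U := hwX
              have hwS : w ∈ S := hUAS w hwU hwnA
              have hwY : w ∈ Y := htQcl u hu.1 hσ w ⟨hEuw, hu.2, hwS⟩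
              exact Or.inl ⟨hwY, hwS⟩
          · -- Q's vertex in Y with σ undefined: must be an E'-sink, impossible
            exfalso
            obtain ⟨z, hz⟩ := hQnoSinkY u hu.1 huQ
            have := htQto u hu.1 huQ ⟨z, hz⟩
            rw [hσ] at this
            exact Bool.noConfusion this
      have fact2 : ∀ k u w, α.f k = some u → u ∈ X → α.f (k+1) = some w → w ∈ X := by
        intro k u w hk hu hk1
        cases hσ : sX.σ u with
        | some z =>
          have h2 : σc u = some z := by rw [hσcX u hu]; exact hσ
          have h3 := hfol k u z hk h2 (by rw [hk1]; exact fun h => nomatch h)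
          rw [hk1] at h3
          cases Option.some.inj h3
          have hd := sX.dom u w hσ
          exact hsXW ▸ hd.2.2.2
        | none =>
          have := hsXcl u (hsXW.symm ▸ hu) hσ w (α.step k u w hk hk1)
          exact hsXW ▸ this
      have hinv : ∀ k u, α.f k = some u → u ∈ (Y ∩ S) ∪ X := by
        intro k
        induction k with
        | zero => intro u h; rw [h0] at h; cases Option.some.inj h; exact hu₀
        | succ k ih =>
          intro u h
          have hk : α.f k ≠ none := fun hn => by
            rw [α.closed k hn] at h; exact nomatch h
          obtain ⟨w, hw⟩ := Option.ne_none_iff_exists'.mp hk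
          rcases ih w hw with hwYS | hwX
          · exact fact1 k w u hw hwYS h
          · exact Or.inr (fact2 k w u hw hwX h)
      by_cases hexX : ∃ k u, α.f k = some u ∧ u ∈ X
      · -- the play enters Q's region of the full game: switch to sX
        obtain ⟨k, u, hk, huX⟩ := hexX
        have hkne : α.f k ≠ none := by rw [hk]; exact fun h => nomatch h
        set γ := α.tail k hkne with hγ
        have hγinv : ∀ j w, γ.f j = some w → w ∈ X := by
          intro j
          induction j with
          | zero =>
            intro w h
            have h' : α.f k = some w := h
            rw [hk] at h'
            cases Option.some.inj h'
            exact huX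
          | succ j ih =>
            intro w h
            rw [hγ, Play.tail_f] at h
            have hj : α.f (k + j) ≠ none :=
              fun hn => by rw [α.mono hn (k + (j+1)) (by omega)] at h; exact nomatch h
            obtain ⟨z, hz⟩ := Option.ne_none_iff_exists'.mp hj
            exact fact2 (k + j) z w hz (ih z (by rw [hγ, Play.tail_f]; exact hz)) h
        have hγfol : γ.Follows sX := by
          intro j w z hj hσ hne
          have hwX : w ∈ X := hγinv j w hj
          have h2 : σc w = some z := by rw [hσcX w hwX]; exact hσ
          exact hfol (k + j) w z hj h2 hne
        have hγC : γ ∈ C := hCmax γ (α.tail_isMax k hkne hmax)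
        have hγ0 : γ.f 0 = some u := by rw [hγ, Play.tail_f]; exact hk
        have := hsXwin γ hγC ⟨u, hγ0, hsXW.symm ▸ huX⟩ hγfol
        exact pws_tail α k hkne hmax this
      · -- the play stays in the subgame : use tQ
        push_neg at hexX
        have hallS : ∀ k u, α.f k = some u → u ∈ Y ∩ S := by
          intro k u hk
          rcases hinv k u hk with h | h
          · exact h
          · exact absurd h (hexX k u hk)
        have hstep' : ∀ k u w, α.f k = some u → α.f (k+1) = some w → E' u w :=
          fun k u w hk hk1 => ⟨α.step k u w hk hk1, (hallS k u hk).2, (hallS (k+1) w hk1).2⟩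
        set β := α.toSub E' hstep' with hβ
        have hβfol : β.Follows tQ := by
          intro j w z hj hσ hne
          have h2 : σc w = some z := by rw [hσcS w (hallS j w hj).2]; exact hσ
          exact hfol j w z hj h2 hne
        have hβC : β ∈ C' := hCmax' β (α.toSub_isMax E' hstep' hE'E hmax)
        have hβ0 : β.f 0 = some u₀ := h0
        have hβwin := htQwin β hβC ⟨u₀, hβ0, hu₀.elim (fun h => h.1) (fun h =>
          absurd h (hexX 0 u₀ h0))⟩ hβfol
        refine ⟨hmax, ?_⟩
        exact winsFor_toSub P b α E' hstep'
          (fun k u hk => hχ'S u (hallS k u hk).2) hβwin.2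
    exact ⟨sComb, hwin, Or.inl ⟨hvY, hvS⟩⟩
  -- Claim 2 : P wins the subgame everywhere on S
  have claim2 : ∀ v ∈ S, WinsAt E' P C' CiP' v := by
    intro v hvS
    have hd1 : 1 ≤ d := le_trans (hχ v).1 (hSd v hvS)
    have hχ'b : ∀ w, 1 ≤ χ' w ∧ χ' w ≤ d := by
      intro w
      rw [hχ']
      dsimp only
      by_cases hw : w ∈ S
      · rw [if_pos hw]; exact ⟨(hχ w).1, hSd w hw⟩
      · rw [if_neg hw]; omega
    rcases IH E' χ' hχ'b v with h | h
    · exact h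
    · exfalso
      obtain ⟨t, ht, hvt⟩ := h
      have hvY : v ∈ Y := by
        rw [htQW]
        exact ⟨t, ht, hvt⟩
      exact (hSU hvS) (claim1 v hvS hvY)
  -- uniform strategy for P in the subgame
  obtain ⟨sP', hsP'win, hsP'W, hsP'cl, hsP'to⟩ :=
    uniform_winning (Vi := P) (C := C') (Ci := CiP') hCmax' hCmem' pws_tail pws_cons
  have hSsubW : ∀ v ∈ S, v ∈ sP'.W := by
    intro v hv
    rw [hsP'W]
    exact claim2 v hv
  -- P-vertices in S are not E'-sinks
  have hPnoSinkS : ∀ u ∈ S, u ∈ P → ∃ z, E' u z := by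
    intro u huS huP
    by_contra hno
    push_neg at hno
    have hallX : ∀ w, E u w → w ∈ X := by
      intro w hEw
      by_contra hwX
      have hwU : w ∈ U := hwX
      have hwnA : w ∉ A := fun hwA => hSA u huS (attr_closed_P (hSU huS) huP hEw hwA)
      exact (hno w) ⟨hEw, huS, hUAS w hwU hwnA⟩
    exact (hSU huS) (hallsucc u (hPnsink u (hSU huS) huP) hallX)
  -- choices for the attractor strategy and on N
  have hattr : ∀ v, ∃ u, (v ∈ A ∧ v ∉ N ∧ v ∈ P) → (E v u ∧ u ∈ A ∧ rk u < rk v) := by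
    intro v
    by_cases h : v ∈ A ∧ v ∉ N ∧ v ∈ P
    · rcases attr_dest h.1 h.2.1 with ⟨-, -, u, hEu, huA, hru⟩ | ⟨-, hQ, -, -⟩
      · exact ⟨u, fun _ => ⟨hEu, huA, hru⟩⟩
      · exact absurd hQ (fun hq => hdisj v h.2.2 hq)
    · exact ⟨v, fun hc => absurd hc h⟩
  choose aNext haNext using hattr
  have hNch : ∀ v, ∃ u, (v ∈ N ∧ v ∈ P) → (E v u ∧ u ∈ U) := by
    intro v
    by_cases h : v ∈ N ∧ v ∈ P
    · obtain ⟨u, hu⟩ := hPsuccU v (hNU h.1) h.2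
      exact ⟨u, fun _ => hu⟩
    · exact ⟨v, fun hc => absurd hc h⟩
  choose nNext hnNext using hNch
  set σp : V → Option V := fun v =>
    if v ∈ S then sP'.σ v
    else if v ∈ A ∧ v ∉ N ∧ v ∈ P then some (aNext v)
    else if v ∈ N ∧ v ∈ P then some (nNext v)
    else none with hσp
  have hσpS : ∀ v ∈ S, σp v = sP'.σ v := fun v hv => if_pos hv
  have hσpA : ∀ v, v ∈ A → v ∉ N → v ∈ P → σp v = some (aNext v) := by
    intro v h1 h2 h3
    rw [hσp]
    dsimp only
    rw [if_neg (hAS v h1), if_pos ⟨h1, h2, h3⟩]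
  have hσpN : ∀ v, v ∈ N → v ∈ P → σp v = some (nNext v) := by
    intro v h1 h3
    rw [hσp]
    dsimp only
    rw [if_neg (hAS v (N_sub_attr h1)), if_neg (fun hc => hc.2.1 h1), if_pos ⟨h1, h3⟩]
  have hσpdom : ∀ w z, σp w = some z → w ∈ U ∧ w ∈ P ∧ E w z ∧ z ∈ U := by
    intro w z h
    by_cases hwS : w ∈ S
    · rw [hσpS w hwS] at h
      have hd := sP'.dom w z h
      exact ⟨hSU hwS, hd.2.1, hd.2.2.1.1, hSU hd.2.2.1.2.2⟩
    · rw [hσp] at h; dsimp only at h; rw [if_neg hwS] at h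
      by_cases hwA : w ∈ A ∧ w ∉ N ∧ w ∈ P
      · rw [if_pos hwA] at h
        cases Option.some.inj h
        obtain ⟨hE1, hA1, -⟩ := haNext w hwA
        exact ⟨hAU hwA.1, hwA.2.2, hE1, hAU hA1⟩
      · rw [if_neg hwA] at h
        by_cases hwN : w ∈ N ∧ w ∈ P
        · rw [if_pos hwN] at h
          cases Option.some.inj h
          obtain ⟨hE1, hU1⟩ := hnNext w hwN
          exact ⟨hNU hwN.1, hwN.2, hE1, hU1⟩
        · rw [if_neg hwN] at h
          exact absurd h (fun hc => nomatch hc)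
  set sP : PStrategy E P := ⟨U, σp, hσpdom⟩ with hsP
  -- Claim 3 : sP is winning on U
  have claim3 : sP.Winning C CiP := by
    rintro α hαC ⟨u₀, h0, hu₀⟩ hfol
    have hmax := hCmem α hαC
    have stepU : ∀ k u w, α.f k = some u → u ∈ U → α.f (k+1) = some w → w ∈ U := by
      intro k u w hk huU hk1
      have hEuw : E u w := α.step k u w hk hk1
      have hne1 : α.f (k+1) ≠ none := by rw [hk1]; exact fun h => nomatch h
      rcases hcov u with huP | huQ
      · -- P's vertex : the strategy is defined and forces the move
        by_cases huS : u ∈ S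
        · obtain ⟨z, hz⟩ := hPnoSinkS u huS huP
          have hσs := hsP'to u (hSsubW u huS) huP ⟨z, hz⟩
          obtain ⟨z', hz'⟩ := Option.isSome_iff_exists.mp hσs
          have h2 : σp u = some z' := by rw [hσpS u huS]; exact hz'
          have h3 := hfol k u z' hk h2 hne1
          rw [hk1] at h3
          cases Option.some.inj h3
          exact hSU (sP'.dom u w hz').2.2.1.2.2
        · have huA : u ∈ A := by
            by_contra hnA
            exact huS (hUAS u huU hnA)
          by_cases huN : u ∈ N
          · have h2 := hσpN u huN huP
            have h3 := hfol k u (nNext u) hk h2 hne1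
            rw [hk1] at h3
            cases Option.some.inj h3
            exact (hnNext u ⟨huN, huP⟩).2
          · have h2 := hσpA u huA huN huP
            have h3 := hfol k u (aNext u) hk h2 hne1
            rw [hk1] at h3
            cases Option.some.inj h3
            exact hAU (haNext u ⟨huA, huN, huP⟩).2.1
      · exact hQsuccU u huU huQ w hEuw
    have posU : ∀ k u, α.f k = some u → u ∈ U := by
      intro k
      induction k with
      | zero => intro u h; rw [h0] at h; cases Option.some.inj h; exact hu₀
      | succ k ih =>
        intro u h
        have hk : α.f k ≠ none := fun hn => by
          rw [α.closed k hn] at h; exact nomatch h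
        obtain ⟨w, hw⟩ := Option.ne_none_iff_exists'.mp hk
        exact stepU k w u hw (ih w hw) h
    rcases hmax with hinf | ⟨n, u, hn, hn1, hsink⟩
    · -- infinite play
      have hpos : ∀ k, ∃ u, α.f k = some u := fun k => Option.ne_none_iff_exists'.mp (hinf k)
      choose pos hposf using hpos
      have hposU : ∀ k, pos k ∈ U := fun k => posU k (pos k) (hposf k)
      by_cases hio : InfOcc χ α (d + 1)
      · refine ⟨Or.inl hinf, Or.inr ⟨hinf, d + 1, hio, hpar, ?_⟩⟩
        intro c' hc'
        obtain ⟨k, -, u, -, hcu⟩ := hc' 0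
        exact hcu ▸ (hχ u).2
      · -- the maximal color is eventually avoided : the play ends up in S
        have hio' : ∃ N₀, ∀ k, N₀ ≤ k → χ (pos k) ≠ d + 1 := by
          unfold InfOcc at hio
          push_neg at hio
          obtain ⟨N₀, hN₀⟩ := hio
          refine ⟨N₀, fun k hk hc => ?_⟩
          exact (hN₀ k hk) (pos k) (hposf k) hc
        obtain ⟨N₀, hN₀⟩ := hio'
        have hnotN : ∀ k, N₀ ≤ k → pos k ∉ N := by
          intro k hk hN1
          exact hN₀ k hk hN1.2
        -- after N₀ the play never visits the attractor
        have hnotA : ∀ k, N₀ ≤ k → pos k ∉ A := by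
          intro k hk hkA
          -- positions stay in A ∖ N with strictly decreasing rank
          have hstay : ∀ j, pos (k + j) ∈ A ∧
              rk (pos (k + j + 1)) < rk (pos (k + j)) := by
            intro j
            induction j with
            | zero =>
              refine ⟨hkA, ?_⟩
              -- one step of rank decrease from position k
              have hgen : ∀ m, N₀ ≤ m → pos m ∈ A → rk (pos (m+1)) < rk (pos m) ∧
                  pos (m+1) ∈ A := by
                intro m hm hmA
                have hmN : pos m ∉ N := hnotN m hm
                have hEm : E (pos m) (pos (m+1)) := α.step m _ _ (hposf m) (hposf (m+1))
                rcases hcov (pos m) with hP1 | hQ1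
                · have h2 := hσpA (pos m) hmA hmN hP1
                  have h3 := hfol m (pos m) (aNext (pos m)) (hposf m) h2 (hinf (m+1))
                  rw [hposf (m+1)] at h3
                  have h4 : aNext (pos m) = pos (m+1) := (Option.some.inj h3).symm
                  obtain ⟨-, hA2, hr2⟩ := haNext (pos m) ⟨hmA, hmN, hP1⟩
                  rw [h4] at hA2 hr2
                  exact ⟨hr2, hA2⟩
                · rcases attr_dest hmA hmN with ⟨-, hP2, -⟩ | ⟨-, -, -, hall⟩
                  · exact absurd hP2 (fun hp => hdisj (pos m) hp hQ1)
                  · obtain ⟨hA2, hr2⟩ := hall (pos (m+1)) hEm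
                    exact ⟨hr2, hA2⟩
              exact (hgen k hk hkA).1
            | succ j ihj =>
              have hgen : ∀ m, N₀ ≤ m → pos m ∈ A → rk (pos (m+1)) < rk (pos m) ∧
                  pos (m+1) ∈ A := by
                intro m hm hmA
                have hmN : pos m ∉ N := hnotN m hm
                have hEm : E (pos m) (pos (m+1)) := α.step m _ _ (hposf m) (hposf (m+1))
                rcases hcov (pos m) with hP1 | hQ1
                · have h2 := hσpA (pos m) hmA hmN hP1
                  have h3 := hfol m (pos m) (aNext (pos m)) (hposf m) h2 (hinf (m+1))
                  rw [hposf (m+1)] at h3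
                  have h4 : aNext (pos m) = pos (m+1) := (Option.some.inj h3).symm
                  obtain ⟨-, hA2, hr2⟩ := haNext (pos m) ⟨hmA, hmN, hP1⟩
                  rw [h4] at hA2 hr2
                  exact ⟨hr2, hA2⟩
                · rcases attr_dest hmA hmN with ⟨-, hP2, -⟩ | ⟨-, -, -, hall⟩
                  · exact absurd hP2 (fun hp => hdisj (pos m) hp hQ1)
                  · obtain ⟨hA2, hr2⟩ := hall (pos (m+1)) hEm
                    exact ⟨hr2, hA2⟩
              have hjA : pos (k + j + 1) ∈ A := (hgen (k+j) (by omega) ihj.1).2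
              have := hgen (k + j + 1) (by omega) hjA
              exact ⟨hjA, by
                have h5 := this.1
                rwa [show k + j + 1 + 1 = k + (j+1) + 1 by omega,
                  show k + j + 1 = k + (j + 1) by omega] at h5⟩
          -- infinite descending sequence of ordinals : contradiction
          set g : ℕ → Ordinal.{0} := fun j => rk (pos (k + j)) with hg
          have hdec : ∀ j, g (j + 1) < g j := by
            intro j
            have := (hstay j).2
            rw [hg]
            dsimp only
            rwa [show k + (j+1) = k + j + 1 by omega]
          obtain ⟨j₀, hj₀⟩ := Ordinal.lt_wf.min_mem (Set.range g) (Set.range_nonempty g)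
          exact Ordinal.lt_wf.not_lt_min (Set.range g)
            ⟨j₀ + 1, rfl⟩ (hj₀ ▸ hdec j₀)
        -- so from N₀ on the play is a subgame play following sP'
        have hposS : ∀ k, N₀ ≤ k → pos k ∈ S := fun k hk =>
          hUAS (pos k) (hposU k) (hnotA k hk)
        set γ := α.tail N₀ (hinf N₀) with hγ
        have hγpos : ∀ j w, γ.f j = some w → w ∈ S := by
          intro j w hj
          rw [hγ, Play.tail_f] at hj
          rw [hposf (N₀ + j)] at hj
          cases Option.some.inj hj
          exact hposS (N₀ + j) (by omega)
        have hstep' : ∀ j u w, γ.f j = some u → γ.f (j+1) = some w → E' u w := by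
          intro j u w hj hj1
          exact ⟨γ.step j u w hj hj1, hγpos j u hj, hγpos (j+1) w hj1⟩
        set β := γ.toSub E' hstep' with hβ
        have hγinf : ∀ j, γ.f j ≠ none := fun j => hinf (N₀ + j)
        have hβfol : β.Follows sP' := by
          intro j w z hj hσ hne
          have hwS : w ∈ S := hγpos j w hj
          have h2 : σp w = some z := by rw [hσpS w hwS]; exact hσ
          have hj' : α.f (N₀ + j) = some w := hj
          exact hfol (N₀ + j) w z hj' h2 (hinf (N₀ + j + 1))
        have hβC : β ∈ C' := hCmax' β (γ.toSub_isMax E' hstep' hE'E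
          (α.tail_isMax N₀ (hinf N₀) (Or.inl hinf)))
        have hβ0 : β.f 0 = some (pos N₀) := by
          show γ.f 0 = some (pos N₀)
          rw [hγ, Play.tail_f]
          exact hposf N₀
        have hβwin := hsP'win β hβC ⟨pos N₀, hβ0, hSsubW _ (hposS N₀ (le_refl N₀))⟩ hβfol
        have hγwins : ParityWinsFor χ Q a γ :=
          winsFor_toSub Q a γ E' hstep' (fun j u hj => hχ'S u (hγpos j u hj)) hβwin.2
        exact ⟨Or.inl hinf, winsFor_tail χ Q a α N₀ (hinf N₀) hγwins⟩
    · -- finite play : ends in a sink of U, which must belong to Q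
      have huU : u ∈ U := posU n u hn
      rcases hcov u with huP | huQ
      · exact absurd (hsinkP u huP hsink) huU
      · exact ⟨Or.inr ⟨n, u, hn, hn1, hsink⟩, Or.inl ⟨n, u, hn, hn1, huQ⟩⟩
  -- conclusion
  intro v
  by_cases hv : v ∈ X
  · exact Or.inr hv
  · exact Or.inl ⟨sP, claim3, hv⟩

end GroupE
-- Group E2 : master induction and assembly
section GroupE2
open Classical
variable {V : Type}

lemma master (d : ℕ) : ∀ (P Q : Set V) (a b : ℕ),
    (∀ v, v ∈ P ∨ v ∈ Q) → (∀ v, v ∈ P → v ∈ Q → False) →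
    (∀ c : ℕ, c % 2 = a ∨ c % 2 = b) →
    ∀ (E : V → V → Prop) (χ : V → ℕ), (∀ v, 1 ≤ χ v ∧ χ v ≤ d) →
    ∀ v, WinsAt E P (GameC E χ P Q a b) (ParityWinSet E χ Q a) v ∨
         WinsAt E Q (GameC E χ P Q a b) (ParityWinSet E χ P b) v := by
  induction d with
  | zero =>
    intro P Q a b hcov hdisj hab E χ hb v
    have := hb v
    omega
  | succ d IHd =>
    intro P Q a b hcov hdisj hab E χ hb v
    rcases hab (d + 1) with hpa | hpb
    · exact mainStep P Q a b hcov hdisj hab d E χ hb hpa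
        (fun E' χ' h => IHd P Q a b hcov hdisj hab E' χ' h) v
    · have hcov' : ∀ v, v ∈ Q ∨ v ∈ P := fun v => (hcov v).symm
      have hdisj' : ∀ v, v ∈ Q → v ∈ P → False := fun v hq hp => hdisj v hp hq
      have hab' : ∀ c : ℕ, c % 2 = b ∨ c % 2 = a := fun c => (hab c).symm
      have hIH' : ∀ (E' : V → V → Prop) (χ' : V → ℕ), (∀ v, 1 ≤ χ' v ∧ χ' v ≤ d) →
          ∀ v, WinsAt E' Q (GameC E' χ' Q P b a) (ParityWinSet E' χ' P b) v ∨
               WinsAt E' P (GameC E' χ' Q P b a) (ParityWinSet E' χ' Q a) v := by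
        intro E' χ' h v
        have hCeq : GameC E' χ' Q P b a = GameC E' χ' P Q a b := Set.union_comm _ _
        rw [hCeq]
        exact (IHd P Q a b hcov hdisj hab E' χ' h v).symm
      have hres := mainStep Q P b a hcov' hdisj' hab' d E χ hb hpb hIH' v
      have hCeq : GameC E χ Q P b a = GameC E χ P Q a b := Set.union_comm _ _
      rw [hCeq] at hres
      exact hres.symm

/-- The common play obtained by letting both strategies act. -/
noncomputable def nextMove {E : V → V → Prop} {V0 V1 : Set V}
    (s0 : PStrategy E V0) (s1 : PStrategy E V1) (u : V) : Option V :=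
  if h0 : (s0.σ u).isSome then s0.σ u
  else if h1 : (s1.σ u).isSome then s1.σ u
  else if h : ∃ w, E u w then some h.choose else none

lemma nextMove_edge {E : V → V → Prop} {V0 V1 : Set V}
    (s0 : PStrategy E V0) (s1 : PStrategy E V1) (u w : V)
    (h : nextMove s0 s1 u = some w) : E u w := by
  unfold nextMove at h
  by_cases h0 : (s0.σ u).isSome
  · rw [dif_pos h0] at h
    exact (s0.dom u w h).2.2.1
  · rw [dif_neg h0] at h
    by_cases h1 : (s1.σ u).isSome
    · rw [dif_pos h1] at h
      exact (s1.dom u w h).2.2.1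
    · rw [dif_neg h1] at h
      by_cases h2 : ∃ w, E u w
      · rw [dif_pos h2] at h
        cases Option.some.inj h
        exact h2.choose_spec
      · rw [dif_neg h2] at h
        exact absurd h (fun hc => nomatch hc)

lemma nextMove_none {E : V → V → Prop} {V0 V1 : Set V}
    (s0 : PStrategy E V0) (s1 : PStrategy E V1) (u : V)
    (h : nextMove s0 s1 u = none) : ∀ w, ¬ E u w := by
  unfold nextMove at h
  by_cases h0 : (s0.σ u).isSome
  · rw [dif_pos h0] at h
    rw [h] at h0
    exact absurd h0 (fun hc => Bool.noConfusion hc)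
  · rw [dif_neg h0] at h
    by_cases h1 : (s1.σ u).isSome
    · rw [dif_pos h1] at h
      rw [h] at h1
      exact absurd h1 (fun hc => Bool.noConfusion hc)
    · rw [dif_neg h1] at h
      by_cases h2 : ∃ w, E u w
      · rw [dif_pos h2] at h
        exact absurd h (fun hc => nomatch hc)
      · rw [dif_neg h2] at h
        push_neg at h2
        exact h2

lemma nextMove_s0 {E : V → V → Prop} {V0 V1 : Set V}
    (s0 : PStrategy E V0) (s1 : PStrategy E V1) (u w : V)
    (h : s0.σ u = some w) : nextMove s0 s1 u = some w := by
  unfold nextMove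
  rw [dif_pos (by rw [h]; rfl)]
  exact h

lemma nextMove_s1 {E : V → V → Prop} {V0 V1 : Set V}
    (s0 : PStrategy E V0) (s1 : PStrategy E V1) (u w : V)
    (h0 : s0.σ u = none) (h : s1.σ u = some w) : nextMove s0 s1 u = some w := by
  unfold nextMove
  rw [dif_neg (by rw [h0]; exact fun hc => Bool.noConfusion hc),
    dif_pos (by rw [h]; rfl)]
  exact h

noncomputable def cpf {E : V → V → Prop} {V0 V1 : Set V}
    (s0 : PStrategy E V0) (s1 : PStrategy E V1) (v : V) : ℕ → Option V :=
  fun n => Nat.rec (some v) (fun _ prev => prev.bind (nextMove s0 s1)) n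

lemma cpf_zero {E : V → V → Prop} {V0 V1 : Set V}
    (s0 : PStrategy E V0) (s1 : PStrategy E V1) (v : V) : cpf s0 s1 v 0 = some v := rfl

lemma cpf_succ {E : V → V → Prop} {V0 V1 : Set V}
    (s0 : PStrategy E V0) (s1 : PStrategy E V1) (v : V) (n : ℕ) :
    cpf s0 s1 v (n + 1) = (cpf s0 s1 v n).bind (nextMove s0 s1) := rfl

noncomputable def commonPlay {E : V → V → Prop} {V0 V1 : Set V}
    (s0 : PStrategy E V0) (s1 : PStrategy E V1) (v : V) : Play V E where
  f := cpf s0 s1 v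
  first := rfl
  closed := by
    intro k hk
    rw [cpf_succ, hk]
    rfl
  step := by
    intro k u w hu hw
    rw [cpf_succ, hu] at hw
    exact nextMove_edge s0 s1 u w hw

lemma commonPlay_zero {E : V → V → Prop} {V0 V1 : Set V}
    (s0 : PStrategy E V0) (s1 : PStrategy E V1) (v : V) :
    (commonPlay s0 s1 v).f 0 = some v := rfl

lemma commonPlay_succ {E : V → V → Prop} {V0 V1 : Set V}
    (s0 : PStrategy E V0) (s1 : PStrategy E V1) (v : V) (k : ℕ) (u : V)
    (h : (commonPlay s0 s1 v).f k = some u) :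
    (commonPlay s0 s1 v).f (k + 1) = nextMove s0 s1 u := by
  show cpf s0 s1 v (k + 1) = nextMove s0 s1 u
  rw [cpf_succ, show cpf s0 s1 v k = some u from h]
  rfl

lemma commonPlay_isMax {E : V → V → Prop} {V0 V1 : Set V}
    (s0 : PStrategy E V0) (s1 : PStrategy E V1) (v : V) :
    (commonPlay s0 s1 v).IsMax := by
  set α := commonPlay s0 s1 v with hα
  by_cases hinf : ∀ k, α.f k ≠ none
  · exact Or.inl hinf
  · push_neg at hinf
    obtain ⟨k, hk⟩ := hinf
    have hex : ∃ n, α.f n ≠ none ∧ α.f (n + 1) = none := by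
      clear hα
      induction k with
      | zero =>
        exfalso
        have h00 : α.f 0 = some v := commonPlay_zero s0 s1 v
        rw [h00] at hk
        exact nomatch hk
      | succ k ih =>
        by_cases hk' : α.f k = none
        · exact ih hk'
        · exact ⟨k, hk', hk⟩
    obtain ⟨n, hn, hn1⟩ := hex
    obtain ⟨u, hu⟩ := Option.ne_none_iff_exists'.mp hn
    have h2 := commonPlay_succ s0 s1 v n u hu
    rw [hn1] at h2
    exact Or.inr ⟨n, u, hu, hn1, nextMove_none s0 s1 u h2.symm⟩

lemma commonPlay_follows0 {E : V → V → Prop} {V0 V1 : Set V}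
    (s0 : PStrategy E V0) (s1 : PStrategy E V1) (v : V) :
    (commonPlay s0 s1 v).Follows s0 := by
  intro k u w hk hσ hne
  rw [commonPlay_succ s0 s1 v k u hk]
  exact nextMove_s0 s0 s1 u w hσ

lemma commonPlay_follows1 {E : V → V → Prop} {V0 V1 : Set V}
    (hdisj : ∀ v, v ∈ V0 → v ∈ V1 → False)
    (s0 : PStrategy E V0) (s1 : PStrategy E V1) (v : V) :
    (commonPlay s0 s1 v).Follows s1 := by
  intro k u w hk hσ hne
  rw [commonPlay_succ s0 s1 v k u hk]
  have h0 : s0.σ u = none := by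
    cases h : s0.σ u with
    | none => rfl
    | some z => exact absurd (s1.dom u w hσ).2.1 (fun hc => hdisj u (s0.dom u z h).2.1 hc)
  exact nextMove_s1 s0 s1 u w h0 hσ

lemma not_both_win {E : V → V → Prop} {χ : V → ℕ} {V0 V1 : Set V}
    (hdisj : ∀ v, v ∈ V0 → v ∈ V1 → False) (α : Play V E)
    (h0 : α ∈ ParityWinSet E χ V1 0) (h1 : α ∈ ParityWinSet E χ V0 1) : False := by
  rcases h0.2 with ⟨n, u, hn, hn1, hu1⟩ | ⟨hinf, c0, hio0, hp0, hm0⟩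
  · rcases h1.2 with ⟨m, u', hm, hm1, hu0⟩ | ⟨hinf, -⟩
    · have hnm : n = m := by
        rcases Nat.lt_trichotomy n m with h | h | h
        · rw [α.mono hn1 m (by omega)] at hm
          exact absurd hm (fun hc => nomatch hc)
        · exact h
        · rw [α.mono hm1 n (by omega)] at hn
          exact absurd hn (fun hc => nomatch hc)
      subst hnm
      rw [hn] at hm
      cases Option.some.inj hm
      exact hdisj u hu0 hu1
    · exact (hinf (n+1)) hn1
  · rcases h1.2 with ⟨m, u', hm, hm1, hu0⟩ | ⟨-, c1, hio1, hp1, hm1⟩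
    · exact (hinf (m+1)) hm1
    · have hc01 : c0 ≤ c1 := hm1 c0 hio0
      have hc10 : c1 ≤ c0 := hm0 c1 hio1
      have : c0 = c1 := by omega
      subst this
      omega

end GroupE2

/-- Parity games (over arbitrary, possibly infinite, game graphs with colors
in `{1,…,d}`) are positionally determined. -/
theorem stmt10 {V : Type} {E : V → V → Prop} (V0 V1 : Set V)
    (hcov : ∀ v, v ∈ V0 ∨ v ∈ V1) (hdisj : V0 ∩ V1 = ∅)
    (χ : V → ℕ) (d : ℕ) (hχ : ∀ v, 1 ≤ χ v ∧ χ v ≤ d) :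
    ∃ (s0 : PStrategy E V0) (s1 : PStrategy E V1),
      s0.Winning (ParityWinSet E χ V1 0 ∪ ParityWinSet E χ V0 1)
        (ParityWinSet E χ V1 0) ∧
      s1.Winning (ParityWinSet E χ V1 0 ∪ ParityWinSet E χ V0 1)
        (ParityWinSet E χ V0 1) ∧
      s0.W ∪ s1.W = Set.univ ∧ s0.W ∩ s1.W = ∅ := by
  have hdisjf : ∀ v, v ∈ V0 → v ∈ V1 → False := fun v h0 h1 =>
    (Set.eq_empty_iff_forall_notMem.mp hdisj v) ⟨h0, h1⟩
  have hab : ∀ c : ℕ, c % 2 = 0 ∨ c % 2 = 1 := fun c => by omega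
  set C : Set (Play V E) := ParityWinSet E χ V1 0 ∪ ParityWinSet E χ V0 1 with hC
  have hCmax : ∀ α : Play V E, α.IsMax → α ∈ C := fun α hm =>
    maxPlay_wins χ V0 V1 0 1 d hcov (fun v => (hχ v).2) hab α hm
  have hCmem : ∀ α ∈ C, Play.IsMax α := by rintro α (h | h) <;> exact h.1
  obtain ⟨s0, hs0win, hs0W, -, -⟩ := uniform_winning (Vi := V0) (C := C)
    (Ci := ParityWinSet E χ V1 0) hCmax hCmem pws_tail pws_cons
  obtain ⟨s1, hs1win, hs1W, -, -⟩ := uniform_winning (Vi := V1) (C := C)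
    (Ci := ParityWinSet E χ V0 1) hCmax hCmem pws_tail pws_cons
  refine ⟨s0, s1, hs0win, hs1win, ?_, ?_⟩
  · apply Set.eq_univ_iff_forall.mpr
    intro v
    rcases master d V0 V1 0 1 hcov hdisjf hab E χ hχ v with h | h
    · left; rw [hs0W]; exact h
    · right; rw [hs1W]; exact h
  · apply Set.eq_empty_iff_forall_notMem.mpr
    rintro v ⟨hv0, hv1⟩
    have hmax := commonPlay_isMax s0 s1 v
    have hαC : commonPlay s0 s1 v ∈ C := hCmax _ hmax
    have h0 := hs0win _ hαC ⟨v, commonPlay_zero s0 s1 v, hv0⟩ (commonPlay_follows0 s0 s1 v)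
    have h1 := hs1win _ hαC ⟨v, commonPlay_zero s0 s1 v, hv1⟩
      (commonPlay_follows1 hdisjf s0 s1 v)
    exact not_both_win hdisjf _ h0 h1
end

section
/- Let d ≡ i mod 2 be the largest color and let W_{1−i} be the support of a maximal (1−i)-strategy in a parity game G. Then W_{1−i} = attr_{1−i}(G, W_{1−i}); consequently, every edge from a position in (V∖W_{1−i}) ∩ V_{1−i} leads back into V∖W_{1−i}, and every non-sink position in (V∖W_{1−i}) ∩ V_i has at least one outgoing edge into V∖W_{1−i}. -/
/-- `A` is attracting for the player owning `Vi` (opponent owning `Vopp`). -/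
def Attracting {V : Type} (Vi Vopp : Set V) (E : V → V → Prop) (A : Set V) : Prop :=
  (∀ u ∈ Vi, (∃ v, E u v ∧ v ∈ A) → u ∈ A) ∧
  (∀ u ∈ Vopp, (∃ v, E u v) → (∀ v, E u v → v ∈ A) → u ∈ A)

/-- The `i`-attractor of `R`: the smallest `i`-attracting set containing `R`. -/
def attrSet {V : Type} (Vi Vopp : Set V) (E : V → V → Prop) (R : Set V) : Set V :=
  ⋂₀ {A | R ⊆ A ∧ Attracting Vi Vopp E A}

section Aux
variable {V : Type} {E : V → V → Prop}

lemma Play.none_mono (α : Play V E) {m n : ℕ} (h : m ≤ n) (hm : α.f m = none) :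
    α.f n = none := by
  induction n, h using Nat.le_induction with
  | base => exact hm
  | succ n _ ih => exact α.closed n ih

/-- The play shifted by one step. -/
def Play.shift (α : Play V E) (h : (α.f 1).isSome) : Play V E where
  f k := α.f (k + 1)
  first := h
  closed k hk := α.closed (k + 1) hk
  step k u v h1 h2 := α.step (k + 1) u v h1 h2

lemma Play.shift_end (α : Play V E) (h : (α.f 1).isSome) (P : V → Prop) :
    (∃ n u, (α.shift h).f n = some u ∧ (α.shift h).f (n + 1) = none ∧ P u)
    ↔ ∃ n u, α.f n = some u ∧ α.f (n + 1) = none ∧ P u := by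
  constructor
  · rintro ⟨n, u, h1, h2, h3⟩
    exact ⟨n + 1, u, h1, h2, h3⟩
  · rintro ⟨n, u, h1, h2, h3⟩
    cases n with
    | zero => rw [h2] at h; simp at h
    | succ n => exact ⟨n, u, h1, h2, h3⟩

lemma Play.shift_inf (α : Play V E) (h : (α.f 1).isSome) :
    (∀ k, (α.shift h).f k ≠ none) ↔ ∀ k, α.f k ≠ none := by
  constructor
  · intro hk k hn
    exact hk k (α.closed k hn)
  · intro hk k
    exact hk (k + 1)

lemma infOcc_shift {χ : V → ℕ} (α : Play V E) (h : (α.f 1).isSome) (c : ℕ) :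
    InfOcc χ (α.shift h) c ↔ InfOcc χ α c := by
  constructor
  · intro hio N
    obtain ⟨k, hk, u, h1, h2⟩ := hio N
    exact ⟨k + 1, by omega, u, h1, h2⟩
  · intro hio N
    obtain ⟨k, hk, u, h1, h2⟩ := hio (N + 1)
    refine ⟨k - 1, by omega, u, ?_, h2⟩
    show α.f (k - 1 + 1) = some u
    rwa [Nat.sub_add_cancel (by omega)]

lemma parityWinsFor_shift {χ : V → ℕ} {S : Set V} {p : ℕ}
    (α : Play V E) (h : (α.f 1).isSome) :
    ParityWinsFor χ S p (α.shift h) ↔ ParityWinsFor χ S p α := by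
  unfold ParityWinsFor
  rw [Play.shift_end α h (fun u => u ∈ S), Play.shift_inf α h]
  refine or_congr Iff.rfl (and_congr Iff.rfl ?_)
  constructor
  · rintro ⟨c, h1, h2, h3⟩
    exact ⟨c, (infOcc_shift α h c).mp h1, h2,
      fun c' hc' => h3 c' ((infOcc_shift α h c').mpr hc')⟩
  · rintro ⟨c, h1, h2, h3⟩
    exact ⟨c, (infOcc_shift α h c).mpr h1, h2,
      fun c' hc' => h3 c' ((infOcc_shift α h c').mp hc')⟩

lemma isMax_shift (α : Play V E) (h : (α.f 1).isSome) :
    (α.shift h).IsMax ↔ α.IsMax := by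
  unfold Play.IsMax
  rw [Play.shift_inf α h, Play.shift_end α h (fun u => ∀ w, ¬ E u w)]

lemma parityWinSet_shift {χ : V → ℕ} {S : Set V} {p : ℕ}
    (α : Play V E) (h : (α.f 1).isSome) :
    α.shift h ∈ ParityWinSet E χ S p ↔ α ∈ ParityWinSet E χ S p := by
  unfold ParityWinSet
  rw [Set.mem_setOf_eq, Set.mem_setOf_eq, isMax_shift α h, parityWinsFor_shift α h]

lemma follows_shift {Vi : Set V} (α : Play V E) (h : (α.f 1).isSome)
    (s : PStrategy E Vi) (hf : α.Follows s) : (α.shift h).Follows s :=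
  fun k u v h1 h2 h3 => hf (k + 1) u v h1 h2 h3

lemma follows_of_le {Vi : Set V} {s t : PStrategy E Vi} (α : Play V E)
    (hσ : ∀ w v, s.σ w = some v → t.σ w = some v) (hf : α.Follows t) :
    α.Follows s :=
  fun k u v h1 h2 h3 => hf k u v h1 (hσ u v h2) h3

lemma win_extend {Vi : Set V} (C Ci : Set (Play V E)) (s t : PStrategy E Vi)
    (hw : s.Winning C Ci)
    (hshiftC : ∀ (α : Play V E) (h : (α.f 1).isSome), α ∈ C → α.shift h ∈ C)
    (hshiftCi : ∀ (α : Play V E) (h : (α.f 1).isSome), α.shift h ∈ Ci → α ∈ Ci)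
    (u : V)
    (htW : t.W ⊆ s.W ∪ {u})
    (hσ : ∀ w v, s.σ w = some v → t.σ w = some v)
    (hstep : ∀ α : Play V E, α ∈ C → α.f 0 = some u → α.Follows t →
      ∃ v, α.f 1 = some v ∧ v ∈ s.W) :
    t.Winning C Ci := by
  rintro α hC ⟨u₀, h0, hW⟩ hf
  have hfs : α.Follows s := follows_of_le α hσ hf
  rcases htW hW with hW' | hW'
  · exact hw α hC ⟨u₀, h0, hW'⟩ hfs
  · rw [Set.mem_singleton_iff] at hW'
    subst hW'
    obtain ⟨v, h1, hvW⟩ := hstep α hC h0 hf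
    have hsome : (α.f 1).isSome := by rw [h1]; rfl
    exact hshiftCi α hsome
      (hw (α.shift hsome) (hshiftC α hsome hC) ⟨v, h1, hvW⟩
        (follows_shift α hsome s hfs))

lemma not_none_one (α : Play V E) (hmax : α.IsMax) {u w : V}
    (h0 : α.f 0 = some u) (hE : E u w) : α.f 1 ≠ none := by
  intro hn
  rcases hmax with hinf | ⟨n, u', hn', hn1, hsink⟩
  · exact hinf 1 hn
  · cases n with
    | zero =>
      rw [h0] at hn'
      cases hn'
      exact hsink w hE
    | succ n =>
      rw [α.none_mono (by omega : 1 ≤ n + 1) hn] at hn'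
      exact absurd hn'.symm (Option.some_ne_none u')

end Aux

/-- Let `d ≡ i mod 2` be the largest color and `W` the support of a maximal
`(1−i)`-strategy (player `i` owns `Vi`, player `1−i` owns `Vopp`). Then `W`
equals the `(1−i)`-attractor of `W`; consequently every edge from
`(V∖W) ∩ Vopp` leads back into `V∖W`, and every non-sink position of
`(V∖W) ∩ Vi` has an edge into `V∖W`. -/


theorem stmt11 {V : Type} {E : V → V → Prop} (Vi Vopp : Set V)
    (hcov : ∀ v, v ∈ Vi ∨ v ∈ Vopp) (hdisj : Vi ∩ Vopp = ∅)
    (χ : V → ℕ) (i d : ℕ) (hi : i ≤ 1) (hpar : d % 2 = i % 2)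
    (hχ : ∀ v, 1 ≤ χ v ∧ χ v ≤ d)
    (s : PStrategy E Vopp)
    (hs : s.MaxWinning
      (ParityWinSet E χ Vopp i ∪ ParityWinSet E χ Vi (1 - i))
      (ParityWinSet E χ Vi (1 - i))) :
    s.W = attrSet Vopp Vi E s.W ∧
    (∀ u, u ∉ s.W → u ∈ Vopp → ∀ v, E u v → v ∉ s.W) ∧
    (∀ u, u ∉ s.W → u ∈ Vi → (∃ v, E u v) → ∃ v, E u v ∧ v ∉ s.W) := by
    classical
  set C := ParityWinSet E χ Vopp i ∪ ParityWinSet E χ Vi (1 - i) with hCdef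
  set Ci := ParityWinSet E χ Vi (1 - i) with hCidef
  have hmaxC : ∀ α ∈ C, α.IsMax := by
    rintro α (⟨h, -⟩ | ⟨h, -⟩) <;> exact h
  have hshiftC : ∀ (α : Play V E) (h : (α.f 1).isSome), α ∈ C → α.shift h ∈ C := by
    rintro α h (hm | hm)
    · exact Or.inl ((parityWinSet_shift α h).mpr hm)
    · exact Or.inr ((parityWinSet_shift α h).mpr hm)
  have hshiftCi : ∀ (α : Play V E) (h : (α.f 1).isSome), α.shift h ∈ Ci → α ∈ Ci :=
    fun α h hm => (parityWinSet_shift α h).mp hm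
  have hatt : Attracting Vopp Vi E s.W := by
    constructor
    · rintro u hu ⟨v, hEuv, hvW⟩
      by_contra huW
      have hdom : ∀ w v', (fun w => if w = u then some v else s.σ w) w = some v' →
          w ∈ s.W ∪ {u} ∧ w ∈ Vopp ∧ E w v' ∧ v' ∈ s.W ∪ {u} := by
        intro w v' hw
        by_cases hwu : w = u
        · subst hwu
          have hw2 : (if w = w then some v else s.σ w) = some v' := hw
          rw [if_pos rfl] at hw2
          cases hw2
          exact ⟨Or.inr rfl, hu, hEuv, Or.inl hvW⟩
        · have hw2 : (if w = u then some v else s.σ w) = some v' := hw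
          rw [if_neg hwu] at hw2
          obtain ⟨a, b, c, dd⟩ := s.dom w v' hw2
          exact ⟨Or.inl a, b, c, Or.inl dd⟩
      set t : PStrategy E Vopp := ⟨s.W ∪ {u}, _, hdom⟩ with ht
      have hσ : ∀ w v', s.σ w = some v' → t.σ w = some v' := by
        intro w v' hw
        by_cases hwu : w = u
        · exact absurd (s.dom w v' hw).1 (by rw [hwu]; exact huW)
        · show (if w = u then some v else s.σ w) = some v'
          rw [if_neg hwu]
          exact hw
      have hstep : ∀ α : Play V E, α ∈ C → α.f 0 = some u → α.Follows t →
          ∃ v', α.f 1 = some v' ∧ v' ∈ s.W := by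
        intro α hC h0 hf
        have hne := not_none_one α (hmaxC α hC) h0 hEuv
        have h1 := hf 0 u v h0 (show (if u = u then some v else s.σ u) = some v from if_pos rfl) hne
        exact ⟨v, h1, hvW⟩
      have htwin : t.Winning C Ci :=
        win_extend C Ci s t hs.1 hshiftC hshiftCi u (fun x hx => hx) hσ hstep
      exact huW ((hs.2 t htwin ⟨Set.subset_union_left, hσ⟩).1 (Or.inr rfl))
    · rintro u hu ⟨v, hEuv⟩ hall
      by_contra huW
      have hdom : ∀ w v', s.σ w = some v' →
          w ∈ s.W ∪ {u} ∧ w ∈ Vopp ∧ E w v' ∧ v' ∈ s.W ∪ {u} := by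
        intro w v' hw
        obtain ⟨a, b, c, dd⟩ := s.dom w v' hw
        exact ⟨Or.inl a, b, c, Or.inl dd⟩
      set t : PStrategy E Vopp := ⟨s.W ∪ {u}, s.σ, hdom⟩ with ht
      have hσ : ∀ w v', s.σ w = some v' → t.σ w = some v' := fun _ _ hw => hw
      have hstep : ∀ α : Play V E, α ∈ C → α.f 0 = some u → α.Follows t →
          ∃ v', α.f 1 = some v' ∧ v' ∈ s.W := by
        intro α hC h0 _
        have hne := not_none_one α (hmaxC α hC) h0 hEuv
        obtain ⟨v', hv'⟩ := Option.ne_none_iff_exists'.mp hne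
        exact ⟨v', hv', hall v' (α.step 0 u v' h0 hv')⟩
      have htwin : t.Winning C Ci :=
        win_extend C Ci s t hs.1 hshiftC hshiftCi u (fun x hx => hx) hσ hstep
      exact huW ((hs.2 t htwin ⟨Set.subset_union_left, hσ⟩).1 (Or.inr rfl))
  refine ⟨?_, ?_, ?_⟩
  · apply Set.Subset.antisymm
    · exact fun x hx => Set.mem_sInter.mpr fun A hA => hA.1 hx
    · exact Set.sInter_subset_of_mem ⟨Set.Subset.refl _, hatt⟩
  · intro u huW hVopp v hEuv hvW
    exact huW (hatt.1 u hVopp ⟨v, hEuv, hvW⟩)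
  · intro u huW hVi hex
    by_contra hc
    push_neg at hc
    exact huW (hatt.2 u hVi hex hc)
end
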